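/- arXiv:1310.6523 — 3 statements merged into one kernel-verified Lean document; each statement's English description precedes it below -/
import Mathlib

section
/- Let c > 0 and let H^{αβγ} (α, β, γ ∈ {0,1,2}) be real constants satisfying the null condition: H^{αβγ} X_α X_β X_γ = 0 (summation over repeated indices) for all X = (X_0, X_1, X_2) ∈ ℝ³ with X_0² = c²(X_1² + X_2²). Then there exists a constant C > 0 such that for all smooth scalar functions u, v, w on (0,∞) × ℝ² and all points (t,x) with r := |x| ≥ c t/2, |H^{αβγ} ∂_α u ∂_β v ∂_γ w| ≤ C⟨t⟩^{-1}[ |Γu||∂v||∂w| + |∂u||Γv||∂w| + |∂u||∂v||Γw| + ⟨ct - r⟩|∂u||∂v||∂w| ], where |Γu| denotes the sum of |Γ_i u| over the vector fields Γ ∈ {∂_0, ∂_1, ∂_2, Ω, S}, |∂u| = |(∂_0 u, ∂_1 u, ∂_2 u)|, and ⟨A⟩ = √(1+|A|²). -/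
open Real

noncomputable def pd (α : Fin 3) (u : (Fin 3 → ℝ) → ℝ) (p : Fin 3 → ℝ) : ℝ :=
  fderiv ℝ u p (Pi.single α 1)

noncomputable def Om (u : (Fin 3 → ℝ) → ℝ) (p : Fin 3 → ℝ) : ℝ :=
  p 1 * pd 2 u p - p 2 * pd 1 u p

noncomputable def Sc (u : (Fin 3 → ℝ) → ℝ) (p : Fin 3 → ℝ) : ℝ :=
  p 0 * pd 0 u p + p 1 * pd 1 u p + p 2 * pd 2 u p

/-- The five vector fields `∂_0, ∂_1, ∂_2, Ω, S`. -/
noncomputable def Gam : Fin 5 → ((Fin 3 → ℝ) → ℝ) → (Fin 3 → ℝ) → ℝ :=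
  ![pd 0, pd 1, pd 2, Om, Sc]

/-- `|Γu|`: sum of the absolute values over the five fields. -/
noncomputable def GamNorm (u : (Fin 3 → ℝ) → ℝ) (p : Fin 3 → ℝ) : ℝ :=
  ∑ j : Fin 5, |Gam j u p|

/-- `|∂u|`: Euclidean norm of the space-time gradient. -/
noncomputable def DNorm (u : (Fin 3 → ℝ) → ℝ) (p : Fin 3 → ℝ) : ℝ :=
  Real.sqrt (∑ α : Fin 3, (pd α u p) ^ 2)

/-- `r = |x|`. -/
noncomputable def rad (p : Fin 3 → ℝ) : ℝ := Real.sqrt ((p 1) ^ 2 + (p 2) ^ 2)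

/-- `⟨A⟩ = √(1+A²)`. -/
noncomputable def jap (A : ℝ) : ℝ := Real.sqrt (1 + A ^ 2)

private lemma abs_le_sqrt3 (d : Fin 3 → ℝ) (α : Fin 3) :
    |d α| ≤ Real.sqrt (∑ β : Fin 3, d β ^ 2) := by
  apply Real.abs_le_sqrt
  fin_cases α <;> simp [Fin.sum_univ_three] <;>
    nlinarith [sq_nonneg (d 0), sq_nonneg (d 1), sq_nonneg (d 2)]

private lemma tri_bound (H : Fin 3 → Fin 3 → Fin 3 → ℝ) (a b c : Fin 3 → ℝ)
    (A B C : ℝ) (hA : 0 ≤ A) (hB : 0 ≤ B) (_hC : 0 ≤ C)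
    (ha : ∀ α, |a α| ≤ A) (hb : ∀ α, |b α| ≤ B) (hc : ∀ α, |c α| ≤ C) :
    |∑ α : Fin 3, ∑ β : Fin 3, ∑ γ : Fin 3, H α β γ * a α * b β * c γ| ≤
      (∑ α : Fin 3, ∑ β : Fin 3, ∑ γ : Fin 3, |H α β γ|) * (A * B * C) := by
  calc |∑ α : Fin 3, ∑ β : Fin 3, ∑ γ : Fin 3, H α β γ * a α * b β * c γ|
      ≤ ∑ α : Fin 3, ∑ β : Fin 3, ∑ γ : Fin 3, |H α β γ * a α * b β * c γ| := by
        refine (Finset.abs_sum_le_sum_abs _ _).trans ?_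
        gcongr with α _
        refine (Finset.abs_sum_le_sum_abs _ _).trans ?_
        gcongr with β _
        exact Finset.abs_sum_le_sum_abs _ _
    _ ≤ ∑ α : Fin 3, ∑ β : Fin 3, ∑ γ : Fin 3, |H α β γ| * (A * B * C) := by
        gcongr with α _ β _ γ _
        rw [abs_mul, abs_mul, abs_mul,
          show |H α β γ| * (A * B * C) = |H α β γ| * A * B * C by ring]
        gcongr <;> first | exact abs_nonneg _ | exact ha α | exact hb β | exact hc γ
    _ = _ := by
        rw [Finset.sum_mul]; congr 1; ext α; rw [Finset.sum_mul]; congr 1; ext β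
        rw [Finset.sum_mul]

private lemma tri_decomp (H : Fin 3 → Fin 3 → Fin 3 → ℝ) (X a b c ra rb rc : Fin 3 → ℝ)
    (qa qb qc : ℝ) (ha : ∀ α, a α = X α * qa + ra α) (hb : ∀ α, b α = X α * qb + rb α)
    (hc : ∀ α, c α = X α * qc + rc α) :
    ∑ α : Fin 3, ∑ β : Fin 3, ∑ γ : Fin 3, H α β γ * a α * b β * c γ
      = (∑ α : Fin 3, ∑ β : Fin 3, ∑ γ : Fin 3, H α β γ * ra α * b β * c γ)
      + (∑ α : Fin 3, ∑ β : Fin 3, ∑ γ : Fin 3, H α β γ * (X α * qa) * rb β * c γ)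
      + (∑ α : Fin 3, ∑ β : Fin 3, ∑ γ : Fin 3, H α β γ * (X α * qa) * (X β * qb) * rc γ)
      + qa * qb * qc * (∑ α : Fin 3, ∑ β : Fin 3, ∑ γ : Fin 3, H α β γ * X α * X β * X γ) := by
  simp only [Fin.sum_univ_three, ha 0, ha 1, ha 2, hb 0, hb 1, hb 2, hc 0, hc 1, hc 2]
  ring


private lemma kstep (c Gm ND : ℝ) (hc : 0 < c) (hGm0 : 0 ≤ Gm) (hND : 0 ≤ ND) :
    (2 * c⁻¹ * Gm + 2 * ND) + c⁻¹ * ((2 + c) * (Gm + ND)) ≤ (4 + c + 4 * c⁻¹) * (Gm + ND) := by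
  have hci : c * c⁻¹ = 1 := mul_inv_cancel₀ hc.ne'
  have hi0 : (0:ℝ) ≤ c⁻¹ := inv_nonneg.2 hc.le
  have e1 : c * c⁻¹ * Gm = Gm := by rw [hci, one_mul]
  have e2 : c * c⁻¹ * ND = ND := by rw [hci, one_mul]
  linarith [hGm0, hND, mul_nonneg hi0 hGm0, mul_nonneg hi0 hND,
    mul_nonneg hc.le hGm0, mul_nonneg hc.le hND, e1, e2]

private lemma brstep (L a1 a2 a3 a4 : ℝ) (hL : 0 ≤ L)
    (h1 : 0 ≤ a1) (h2 : 0 ≤ a2) (h3 : 0 ≤ a3) (h4 : 0 ≤ a4) :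
    (a1 + a4) + L * (a2 + a4) + L ^ 2 * (a3 + a4)
      ≤ 3 * (1 + L) ^ 2 * (a1 + a2 + a3 + a4) := by
  have c1 : 0 ≤ (3 * (1 + L) ^ 2 - 1) * a1 :=
    mul_nonneg (by nlinarith [sq_nonneg L]) h1
  have c2 : 0 ≤ (3 * (1 + L) ^ 2 - L) * a2 :=
    mul_nonneg (by nlinarith [sq_nonneg L]) h2
  have c3 : 0 ≤ (3 * (1 + L) ^ 2 - L ^ 2) * a3 :=
    mul_nonneg (by nlinarith [sq_nonneg L]) h3
  have c4 : 0 ≤ (3 * (1 + L) ^ 2 - 1 - L - L ^ 2) * a4 :=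
    mul_nonneg (by nlinarith [sq_nonneg L]) h4
  linarith [c1, c2, c3, c4]

set_option maxHeartbeats 2000000 in
/-- Null-form estimate for a cubic semi-linear term (Lemma 4.2, inequality for `H`). -/
theorem null_form_estimate_semilinear (c : ℝ) (hc : 0 < c)
    (H : Fin 3 → Fin 3 → Fin 3 → ℝ)
    (hnull : ∀ X : Fin 3 → ℝ, X 0 ^ 2 = c ^ 2 * (X 1 ^ 2 + X 2 ^ 2) →
      ∑ α : Fin 3, ∑ β : Fin 3, ∑ γ : Fin 3, H α β γ * X α * X β * X γ = 0) :
    ∃ C > (0 : ℝ), ∀ u v w : (Fin 3 → ℝ) → ℝ,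
      ContDiff ℝ (⊤ : ℕ∞) u → ContDiff ℝ (⊤ : ℕ∞) v → ContDiff ℝ (⊤ : ℕ∞) w →
      ∀ p : Fin 3 → ℝ, 0 < p 0 → c * p 0 / 2 ≤ rad p →
      |∑ α : Fin 3, ∑ β : Fin 3, ∑ γ : Fin 3,
          H α β γ * pd α u p * pd β v p * pd γ w p| ≤
        C * (jap (p 0))⁻¹ *
          (GamNorm u p * DNorm v p * DNorm w p
            + DNorm u p * GamNorm v p * DNorm w p
            + DNorm u p * DNorm v p * GamNorm w p
            + jap (c * p 0 - rad p) * DNorm u p * DNorm v p * DNorm w p) := by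
  classical
  have hM0 : (0:ℝ) ≤ ∑ α : Fin 3, ∑ β : Fin 3, ∑ γ : Fin 3, |H α β γ| :=
    Finset.sum_nonneg fun _ _ => Finset.sum_nonneg fun _ _ =>
      Finset.sum_nonneg fun _ _ => abs_nonneg _
  set M : ℝ := ∑ α : Fin 3, ∑ β : Fin 3, ∑ γ : Fin 3, |H α β γ| with hMdef
  have hi0 : (0:ℝ) ≤ c⁻¹ := inv_nonneg.2 hc.le
  have hci : c * c⁻¹ = 1 := mul_inv_cancel₀ hc.ne'
  set K : ℝ := 4 + c + 4 * c⁻¹ with hKdef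
  set L : ℝ := 1 + c⁻¹ with hLdef
  have hK0 : 0 < K := by rw [hKdef]; nlinarith
  have hL0 : 0 < L := by rw [hLdef]; nlinarith
  have hCpos : (0:ℝ) < 1 + 3 * M * K * (1 + L) ^ 2 := by
    have h1 : 0 ≤ 3 * M * K := by
      have := mul_nonneg hM0 hK0.le; linarith
    have h2 : 0 ≤ 3 * M * K * (1 + L) ^ 2 := mul_nonneg h1 (sq_nonneg (1 + L))
    linarith
  refine ⟨1 + 3 * M * K * (1 + L) ^ 2, hCpos, ?_⟩
  intro u v w _ _ _ p ht hrp
  have hr0 : 0 < rad p := lt_of_lt_of_le (by linarith [mul_pos hc ht] : (0:ℝ) < c * p 0 / 2) hrp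
  have hrne : rad p ≠ 0 := ne_of_gt hr0
  have hr2 : rad p ^ 2 = p 1 ^ 2 + p 2 ^ 2 := Real.sq_sqrt (by positivity)
  set w1 := p 1 / rad p with hw1def
  set w2 := p 2 / rad p with hw2def
  have hp1 : w1 * rad p = p 1 := div_mul_cancel₀ _ hrne
  have hp2 : w2 * rad p = p 2 := div_mul_cancel₀ _ hrne
  have hww : w1 ^ 2 + w2 ^ 2 = 1 := by
    rw [hw1def, hw2def, div_pow, div_pow, ← add_div, ← hr2, div_self (pow_ne_zero 2 hrne)]
  have hw1a : |w1| ≤ 1 := by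
    rw [abs_le]
    constructor
    · linarith [sq_nonneg (w1 + 1), sq_nonneg w2]
    · linarith [sq_nonneg (w1 - 1), sq_nonneg w2]
  have hw2a : |w2| ≤ 1 := by
    rw [abs_le]
    constructor
    · linarith [sq_nonneg (w2 + 1), sq_nonneg w1]
    · linarith [sq_nonneg (w2 - 1), sq_nonneg w1]
  have japt_pos : 0 < jap (p 0) := Real.sqrt_pos.2 (by positivity)
  have japle : jap (p 0) ≤ 1 + p 0 := by
    rw [jap, show (1:ℝ) + p 0 = Real.sqrt ((1 + p 0) ^ 2) from (Real.sqrt_sq (by linarith)).symm]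
    exact Real.sqrt_le_sqrt (by nlinarith)
  have hNw1 : 1 ≤ jap (c * p 0 - rad p) := by
    rw [jap]
    nlinarith [Real.sq_sqrt (show (0:ℝ) ≤ 1 + (c * p 0 - rad p) ^ 2 by positivity),
      Real.sqrt_nonneg (1 + (c * p 0 - rad p) ^ 2), sq_nonneg (c * p 0 - rad p)]
  have hNwa : |c * p 0 - rad p| ≤ jap (c * p 0 - rad p) := Real.abs_le_sqrt (by nlinarith)
  set Nw := jap (c * p 0 - rad p) with hNwdef
  have hNw0 : 0 ≤ Nw := by linarith
  -- key remainder estimate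
  have key : ∀ d : Fin 3 → ℝ, ∀ α : Fin 3,
      |d α - ![-c, w1, w2] α * (-(d 0) * c⁻¹)| ≤
        K * (jap (p 0))⁻¹ *
          ((|d 0| + |d 1| + |d 2| + |p 1 * d 2 - p 2 * d 1|
              + |p 0 * d 0 + p 1 * d 1 + p 2 * d 2|)
            + Nw * Real.sqrt (∑ β : Fin 3, d β ^ 2)) := by
    intro d α
    set D := Real.sqrt (∑ β : Fin 3, d β ^ 2) with hD
    have hD0 : 0 ≤ D := Real.sqrt_nonneg _
    have hDa : ∀ β, |d β| ≤ D := fun β => abs_le_sqrt3 d β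
    set Gm := |d 0| + |d 1| + |d 2| + |p 1 * d 2 - p 2 * d 1|
        + |p 0 * d 0 + p 1 * d 1 + p 2 * d 2| with hGm
    have hGm0 : 0 ≤ Gm := by rw [hGm]; positivity
    have hND : 0 ≤ Nw * D := mul_nonneg hNw0 hD0
    have hBB0 : 0 ≤ Gm + Nw * D := by linarith
    have hfin : ∀ Rv : ℝ, jap (p 0) * |Rv| ≤ K * (Gm + Nw * D) →
        |Rv| ≤ K * (jap (p 0))⁻¹ * (Gm + Nw * D) := by
      intro Rv h
      rw [show K * (jap (p 0))⁻¹ * (Gm + Nw * D)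
            = (jap (p 0))⁻¹ * (K * (Gm + Nw * D)) by ring]
      calc |Rv| = (jap (p 0))⁻¹ * (jap (p 0) * |Rv|) := by
            rw [← mul_assoc, inv_mul_cancel₀ japt_pos.ne', one_mul]
        _ ≤ (jap (p 0))⁻¹ * (K * (Gm + Nw * D)) :=
            mul_le_mul_of_nonneg_left h (inv_nonneg.2 japt_pos.le)
    set dr := w1 * d 1 + w2 * d 2 with hdr
    set Gq := d 0 + c * dr with hGq
    have hdrD : |dr| ≤ D := by
      rw [hdr, hD]
      apply Real.abs_le_sqrt
      rw [Fin.sum_univ_three]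
      have hid : (w1 * d 1 + w2 * d 2) ^ 2 + (w1 * d 2 - w2 * d 1) ^ 2
          = d 1 ^ 2 + d 2 ^ 2 := by linear_combination (d 1 ^ 2 + d 2 ^ 2) * hww
      linarith [sq_nonneg (w1 * d 2 - w2 * d 1), sq_nonneg (d 0)]
    have hG1 : |Gq| ≤ (1 + c) * D := by
      have h1 : |Gq| ≤ |d 0| + c * |dr| := by
        rw [hGq]
        refine (abs_add_le _ _).trans ?_
        rw [abs_mul, abs_of_pos hc]
      have h2 := mul_le_mul_of_nonneg_left hdrD hc.le
      linarith [hDa 0]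
    have hSid : p 0 * Gq = (p 0 * d 0 + p 1 * d 1 + p 2 * d 2)
        + (c * p 0 - rad p) * dr := by
      rw [hGq, hdr]; linear_combination (d 1) * hp1 + (d 2) * hp2
    have hG2 : p 0 * |Gq| ≤ Gm + Nw * D := by
      have e1 : p 0 * |Gq| = |p 0 * Gq| := by rw [abs_mul, abs_of_pos ht]
      have e2 : |p 0 * Gq| ≤ |p 0 * d 0 + p 1 * d 1 + p 2 * d 2|
          + |c * p 0 - rad p| * |dr| := by
        rw [hSid, ← abs_mul]; exact abs_add_le _ _
      have e3 : |p 0 * d 0 + p 1 * d 1 + p 2 * d 2| ≤ Gm := by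
        rw [hGm]
        have := abs_nonneg (d 0); have := abs_nonneg (d 1); have := abs_nonneg (d 2)
        have := abs_nonneg (p 1 * d 2 - p 2 * d 1)
        linarith
      have e4 : |c * p 0 - rad p| * |dr| ≤ Nw * D :=
        mul_le_mul hNwa hdrD (abs_nonneg _) hNw0
      linarith
    have hDND : D ≤ Nw * D := le_mul_of_one_le_left hD0 hNw1
    have hGb : jap (p 0) * |Gq| ≤ (2 + c) * (Gm + Nw * D) := by
      have h1 : jap (p 0) * |Gq| ≤ (1 + p 0) * |Gq| :=
        mul_le_mul_of_nonneg_right japle (abs_nonneg _)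
      have h2 : (1 + c) * D ≤ (1 + c) * (Nw * D) :=
        mul_le_mul_of_nonneg_left hDND (by linarith)
      have h3 : 0 ≤ (1 + c) * Gm := mul_nonneg (by linarith) hGm0
      linarith [hG1, hG2]
    set E := |w1 * d 2 - w2 * d 1| with hE
    have hE0 : 0 ≤ E := abs_nonneg _
    have hE2D : E ≤ 2 * D := by
      rw [hE]
      have h1 : |w1 * d 2 - w2 * d 1| ≤ |w1 * d 2| + |w2 * d 1| := abs_sub _ _
      rw [abs_mul, abs_mul] at h1
      have h2 := mul_le_mul_of_nonneg_right hw1a (abs_nonneg (d 2))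
      have h3 := mul_le_mul_of_nonneg_right hw2a (abs_nonneg (d 1))
      linarith [hDa 1, hDa 2]
    have hOmid : p 1 * d 2 - p 2 * d 1 = rad p * (w1 * d 2 - w2 * d 1) := by
      linear_combination (-(d 2)) * hp1 + (d 1) * hp2
    have hrE : rad p * E = |p 1 * d 2 - p 2 * d 1| := by
      rw [hE, hOmid, abs_mul, abs_of_pos hr0]
    have hjE : jap (p 0) * E ≤ 2 * c⁻¹ * Gm + 2 * (Nw * D) := by
      have h1 : jap (p 0) * E ≤ E + p 0 * E := by
        have := mul_le_mul_of_nonneg_right japle hE0; linarith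
      have h2 : c * (p 0 * E) ≤ 2 * |p 1 * d 2 - p 2 * d 1| := by
        rw [← hrE]
        have := mul_le_mul_of_nonneg_right hrp hE0
        linarith
      have h3 : p 0 * E ≤ 2 * c⁻¹ * |p 1 * d 2 - p 2 * d 1| := by
        have h4 := mul_le_mul_of_nonneg_left h2 hi0
        calc p 0 * E = c⁻¹ * (c * (p 0 * E)) := by
              rw [← mul_assoc, mul_comm c⁻¹ c, hci, one_mul]
          _ ≤ c⁻¹ * (2 * |p 1 * d 2 - p 2 * d 1|) := h4
          _ = 2 * c⁻¹ * |p 1 * d 2 - p 2 * d 1| := by ring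
      have h5 : E ≤ 2 * (Nw * D) := by linarith [hE2D, hDND]
      have h6 : |p 1 * d 2 - p 2 * d 1| ≤ Gm := by
        rw [hGm]
        have := abs_nonneg (d 0); have := abs_nonneg (d 1); have := abs_nonneg (d 2)
        have := abs_nonneg (p 0 * d 0 + p 1 * d 1 + p 2 * d 2)
        linarith
      linarith [h1, h3, h5, mul_nonneg hi0 (sub_nonneg.2 h6)]
    fin_cases α
    · show |d 0 - (-c) * (-(d 0) * c⁻¹)| ≤ _
      rw [show d 0 - (-c) * (-(d 0) * c⁻¹) = d 0 * (1 - c * c⁻¹) by ring, hci]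
      simp only [sub_self, mul_zero, abs_zero]
      exact mul_nonneg (mul_nonneg hK0.le (inv_nonneg.2 japt_pos.le)) hBB0
    · show |d 1 - w1 * (-(d 0) * c⁻¹)| ≤ _
      apply hfin
      have hid1 : d 1 - w1 * (-(d 0) * c⁻¹) = (d 1 - w1 * dr) + w1 * c⁻¹ * Gq := by
        rw [hGq, hdr]; field_simp; ring
      have hT1 : d 1 - w1 * dr = -w2 * (w1 * d 2 - w2 * d 1) := by
        rw [hdr]; linear_combination (-(d 1)) * hww
      have habs1 : |d 1 - w1 * (-(d 0) * c⁻¹)| ≤ E + c⁻¹ * |Gq| := by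
        rw [hid1]
        refine (abs_add_le _ _).trans ?_
        have t1 : |d 1 - w1 * dr| ≤ E := by
          rw [hT1, abs_mul, abs_neg, hE]
          have := mul_le_mul_of_nonneg_right hw2a (abs_nonneg (w1 * d 2 - w2 * d 1))
          linarith
        have t2 : |w1 * c⁻¹ * Gq| ≤ c⁻¹ * |Gq| := by
          rw [abs_mul, abs_mul, abs_of_nonneg hi0]
          have := mul_le_mul_of_nonneg_right
            (mul_le_mul_of_nonneg_right hw1a hi0) (abs_nonneg Gq)
          linarith
        linarith
      calc jap (p 0) * |d 1 - w1 * (-(d 0) * c⁻¹)|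
          ≤ jap (p 0) * (E + c⁻¹ * |Gq|) :=
            mul_le_mul_of_nonneg_left habs1 japt_pos.le
        _ = jap (p 0) * E + c⁻¹ * (jap (p 0) * |Gq|) := by ring
        _ ≤ (2 * c⁻¹ * Gm + 2 * (Nw * D)) + c⁻¹ * ((2 + c) * (Gm + Nw * D)) := by
            have := mul_le_mul_of_nonneg_left hGb hi0
            linarith [hjE]
        _ ≤ K * (Gm + Nw * D) := by
            rw [hKdef]
            exact kstep c Gm (Nw * D) hc hGm0 hND
    · show |d 2 - w2 * (-(d 0) * c⁻¹)| ≤ _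
      apply hfin
      have hid2 : d 2 - w2 * (-(d 0) * c⁻¹) = (d 2 - w2 * dr) + w2 * c⁻¹ * Gq := by
        rw [hGq, hdr]; field_simp; ring
      have hT2 : d 2 - w2 * dr = w1 * (w1 * d 2 - w2 * d 1) := by
        rw [hdr]; linear_combination (-(d 2)) * hww
      have habs2 : |d 2 - w2 * (-(d 0) * c⁻¹)| ≤ E + c⁻¹ * |Gq| := by
        rw [hid2]
        refine (abs_add_le _ _).trans ?_
        have t1 : |d 2 - w2 * dr| ≤ E := by
          rw [hT2, abs_mul, hE]
          have := mul_le_mul_of_nonneg_right hw1a (abs_nonneg (w1 * d 2 - w2 * d 1))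
          linarith
        have t2 : |w2 * c⁻¹ * Gq| ≤ c⁻¹ * |Gq| := by
          rw [abs_mul, abs_mul, abs_of_nonneg hi0]
          have := mul_le_mul_of_nonneg_right
            (mul_le_mul_of_nonneg_right hw2a hi0) (abs_nonneg Gq)
          linarith
        linarith
      calc jap (p 0) * |d 2 - w2 * (-(d 0) * c⁻¹)|
          ≤ jap (p 0) * (E + c⁻¹ * |Gq|) :=
            mul_le_mul_of_nonneg_left habs2 japt_pos.le
        _ = jap (p 0) * E + c⁻¹ * (jap (p 0) * |Gq|) := by ring
        _ ≤ (2 * c⁻¹ * Gm + 2 * (Nw * D)) + c⁻¹ * ((2 + c) * (Gm + Nw * D)) := by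
            have := mul_le_mul_of_nonneg_left hGb hi0
            linarith [hjE]
        _ ≤ K * (Gm + Nw * D) := by
            rw [hKdef]
            exact kstep c Gm (Nw * D) hc hGm0 hND
  -- identify the norms
  have hGamN : ∀ f : (Fin 3 → ℝ) → ℝ, GamNorm f p
      = |pd 0 f p| + |pd 1 f p| + |pd 2 f p| + |p 1 * pd 2 f p - p 2 * pd 1 f p|
        + |p 0 * pd 0 f p + p 1 * pd 1 f p + p 2 * pd 2 f p| := by
    intro f
    rw [GamNorm, Fin.sum_univ_five]
    rfl
  have hGamN0 : ∀ f : (Fin 3 → ℝ) → ℝ, 0 ≤ GamNorm f p :=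
    fun f => Finset.sum_nonneg fun _ _ => abs_nonneg _
  have hDN0 : ∀ f : (Fin 3 → ℝ) → ℝ, 0 ≤ DNorm f p := fun f => Real.sqrt_nonneg _
  set qu := -(pd 0 u p) * c⁻¹ with hqu
  set qv := -(pd 0 v p) * c⁻¹ with hqv
  set qw := -(pd 0 w p) * c⁻¹ with hqw
  have hX : (![-c, w1, w2] : Fin 3 → ℝ) 0 ^ 2
      = c ^ 2 * ((![-c, w1, w2] : Fin 3 → ℝ) 1 ^ 2 + (![-c, w1, w2] : Fin 3 → ℝ) 2 ^ 2) := by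
    show (-c) ^ 2 = c ^ 2 * (w1 ^ 2 + w2 ^ 2)
    rw [hww]; ring
  have hzero := hnull _ hX
  have hdec : ∑ α : Fin 3, ∑ β : Fin 3, ∑ γ : Fin 3,
        H α β γ * pd α u p * pd β v p * pd γ w p
      = (∑ α : Fin 3, ∑ β : Fin 3, ∑ γ : Fin 3,
          H α β γ * (pd α u p - ![-c, w1, w2] α * qu) * pd β v p * pd γ w p)
      + (∑ α : Fin 3, ∑ β : Fin 3, ∑ γ : Fin 3,
          H α β γ * (![-c, w1, w2] α * qu) * (pd β v p - ![-c, w1, w2] β * qv) * pd γ w p)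
      + (∑ α : Fin 3, ∑ β : Fin 3, ∑ γ : Fin 3,
          H α β γ * (![-c, w1, w2] α * qu) * (![-c, w1, w2] β * qv)
            * (pd γ w p - ![-c, w1, w2] γ * qw))
      + qu * qv * qw * (∑ α : Fin 3, ∑ β : Fin 3, ∑ γ : Fin 3,
          H α β γ * ![-c, w1, w2] α * ![-c, w1, w2] β * ![-c, w1, w2] γ) :=
    tri_decomp H (![-c, w1, w2]) (fun α => pd α u p) (fun β => pd β v p) (fun γ => pd γ w p)
      (fun α => pd α u p - ![-c, w1, w2] α * qu) (fun β => pd β v p - ![-c, w1, w2] β * qv)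
      (fun γ => pd γ w p - ![-c, w1, w2] γ * qw) qu qv qw
      (fun α => by ring) (fun β => by ring) (fun γ => by ring)
  rw [hdec, hzero, mul_zero, add_zero]
  set J := (jap (p 0))⁻¹ with hJ
  have hJ0 : 0 ≤ J := inv_nonneg.2 japt_pos.le
  set Au := K * J * (GamNorm u p + Nw * DNorm u p) with hAu
  set Av := K * J * (GamNorm v p + Nw * DNorm v p) with hAv
  set Aw := K * J * (GamNorm w p + Nw * DNorm w p) with hAw
  have hBu0 : 0 ≤ GamNorm u p + Nw * DNorm u p := by
    have := mul_nonneg hNw0 (hDN0 u); linarith [hGamN0 u]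
  have hBv0 : 0 ≤ GamNorm v p + Nw * DNorm v p := by
    have := mul_nonneg hNw0 (hDN0 v); linarith [hGamN0 v]
  have hBw0 : 0 ≤ GamNorm w p + Nw * DNorm w p := by
    have := mul_nonneg hNw0 (hDN0 w); linarith [hGamN0 w]
  have hAu0 : 0 ≤ Au := by
    rw [hAu]; exact mul_nonneg (mul_nonneg hK0.le hJ0) hBu0
  have hAv0 : 0 ≤ Av := by
    rw [hAv]; exact mul_nonneg (mul_nonneg hK0.le hJ0) hBv0
  have hAw0 : 0 ≤ Aw := by
    rw [hAw]; exact mul_nonneg (mul_nonneg hK0.le hJ0) hBw0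
  have hkeyu : ∀ α, |pd α u p - ![-c, w1, w2] α * qu| ≤ Au := by
    intro α
    rw [hAu, hqu, hGamN u, hJ]
    exact key (fun β => pd β u p) α
  have hkeyv : ∀ α, |pd α v p - ![-c, w1, w2] α * qv| ≤ Av := by
    intro α
    rw [hAv, hqv, hGamN v, hJ]
    exact key (fun β => pd β v p) α
  have hkeyw : ∀ α, |pd α w p - ![-c, w1, w2] α * qw| ≤ Aw := by
    intro α
    rw [hAw, hqw, hGamN w, hJ]
    exact key (fun β => pd β w p) α
  have hLD0u : 0 ≤ L * DNorm u p := mul_nonneg hL0.le (hDN0 u)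
  have hLD0v : 0 ≤ L * DNorm v p := mul_nonneg hL0.le (hDN0 v)
  have hXq : ∀ (f : (Fin 3 → ℝ) → ℝ) (α : Fin 3),
      |![-c, w1, w2] α * (-(pd 0 f p) * c⁻¹)| ≤ L * DNorm f p := by
    intro f α
    have hds : |pd 0 f p| ≤ DNorm f p := abs_le_sqrt3 (fun β => pd β f p) 0
    have hD0f : 0 ≤ DNorm f p := hDN0 f
    rw [hLdef]
    fin_cases α
    · show |(-c) * (-(pd 0 f p) * c⁻¹)| ≤ _
      rw [show (-c) * (-(pd 0 f p) * c⁻¹) = pd 0 f p * (c * c⁻¹) by ring, hci, mul_one]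
      linarith [mul_nonneg hi0 hD0f, hds]
    · show |w1 * (-(pd 0 f p) * c⁻¹)| ≤ _
      rw [abs_mul, abs_mul, abs_neg, abs_of_nonneg hi0]
      have h2 := mul_le_mul_of_nonneg_right hw1a (mul_nonneg (abs_nonneg (pd 0 f p)) hi0)
      have h3 := mul_le_mul_of_nonneg_right hds hi0
      linarith [hD0f]
    · show |w2 * (-(pd 0 f p) * c⁻¹)| ≤ _
      rw [abs_mul, abs_mul, abs_neg, abs_of_nonneg hi0]
      have h2 := mul_le_mul_of_nonneg_right hw2a (mul_nonneg (abs_nonneg (pd 0 f p)) hi0)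
      have h3 := mul_le_mul_of_nonneg_right hds hi0
      linarith [hD0f]
  have hdb : ∀ (f : (Fin 3 → ℝ) → ℝ) (α : Fin 3), |pd α f p| ≤ DNorm f p :=
    fun f α => abs_le_sqrt3 (fun β => pd β f p) α
  have hb1 : |∑ α : Fin 3, ∑ β : Fin 3, ∑ γ : Fin 3,
        H α β γ * (pd α u p - ![-c, w1, w2] α * qu) * pd β v p * pd γ w p|
      ≤ M * (Au * DNorm v p * DNorm w p) :=
    tri_bound H _ _ _ Au (DNorm v p) (DNorm w p) hAu0 (hDN0 v) (hDN0 w)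
      hkeyu (fun β => hdb v β) (fun γ => hdb w γ)
  have hb2 : |∑ α : Fin 3, ∑ β : Fin 3, ∑ γ : Fin 3,
        H α β γ * (![-c, w1, w2] α * qu) * (pd β v p - ![-c, w1, w2] β * qv) * pd γ w p|
      ≤ M * ((L * DNorm u p) * Av * DNorm w p) :=
    tri_bound H _ _ _ (L * DNorm u p) Av (DNorm w p) hLD0u hAv0 (hDN0 w)
      (fun α => hqu ▸ hXq u α) hkeyv (fun γ => hdb w γ)
  have hb3 : |∑ α : Fin 3, ∑ β : Fin 3, ∑ γ : Fin 3,
        H α β γ * (![-c, w1, w2] α * qu) * (![-c, w1, w2] β * qv)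
          * (pd γ w p - ![-c, w1, w2] γ * qw)|
      ≤ M * ((L * DNorm u p) * (L * DNorm v p) * Aw) :=
    tri_bound H _ _ _ (L * DNorm u p) (L * DNorm v p) Aw hLD0u hLD0v hAw0
      (fun α => hqu ▸ hXq u α) (fun β => hqv ▸ hXq v β) hkeyw
  -- assemble
  set a1 := GamNorm u p * DNorm v p * DNorm w p with ha1def
  set a2 := DNorm u p * GamNorm v p * DNorm w p with ha2def
  set a3 := DNorm u p * DNorm v p * GamNorm w p with ha3def
  set a4 := Nw * DNorm u p * DNorm v p * DNorm w p with ha4def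
  have ha1 : 0 ≤ a1 := by
    rw [ha1def]; exact mul_nonneg (mul_nonneg (hGamN0 u) (hDN0 v)) (hDN0 w)
  have ha2 : 0 ≤ a2 := by
    rw [ha2def]; exact mul_nonneg (mul_nonneg (hDN0 u) (hGamN0 v)) (hDN0 w)
  have ha3 : 0 ≤ a3 := by
    rw [ha3def]; exact mul_nonneg (mul_nonneg (hDN0 u) (hDN0 v)) (hGamN0 w)
  have ha4 : 0 ≤ a4 := by
    rw [ha4def]
    exact mul_nonneg (mul_nonneg (mul_nonneg hNw0 (hDN0 u)) (hDN0 v)) (hDN0 w)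
  have hsum : M * (Au * DNorm v p * DNorm w p) + M * ((L * DNorm u p) * Av * DNorm w p)
        + M * ((L * DNorm u p) * (L * DNorm v p) * Aw)
      = M * K * J * ((a1 + a4) + L * (a2 + a4) + L ^ 2 * (a3 + a4)) := by
    rw [hAu, hAv, hAw, ha1def, ha2def, ha3def, ha4def]; ring
  have hbr : (a1 + a4) + L * (a2 + a4) + L ^ 2 * (a3 + a4)
      ≤ 3 * (1 + L) ^ 2 * (a1 + a2 + a3 + a4) :=
    brstep L a1 a2 a3 a4 hL0.le ha1 ha2 ha3 ha4
  have hMKJ : 0 ≤ M * K * J := mul_nonneg (mul_nonneg hM0 hK0.le) hJ0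
  calc |(∑ α : Fin 3, ∑ β : Fin 3, ∑ γ : Fin 3,
          H α β γ * (pd α u p - ![-c, w1, w2] α * qu) * pd β v p * pd γ w p)
      + (∑ α : Fin 3, ∑ β : Fin 3, ∑ γ : Fin 3,
          H α β γ * (![-c, w1, w2] α * qu) * (pd β v p - ![-c, w1, w2] β * qv) * pd γ w p)
      + (∑ α : Fin 3, ∑ β : Fin 3, ∑ γ : Fin 3,
          H α β γ * (![-c, w1, w2] α * qu) * (![-c, w1, w2] β * qv)
            * (pd γ w p - ![-c, w1, w2] γ * qw))|
      ≤ M * (Au * DNorm v p * DNorm w p) + M * ((L * DNorm u p) * Av * DNorm w p)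
        + M * ((L * DNorm u p) * (L * DNorm v p) * Aw) := by
        refine (abs_add_le _ _).trans ?_
        have := abs_add_le (∑ α : Fin 3, ∑ β : Fin 3, ∑ γ : Fin 3,
            H α β γ * (pd α u p - ![-c, w1, w2] α * qu) * pd β v p * pd γ w p)
          (∑ α : Fin 3, ∑ β : Fin 3, ∑ γ : Fin 3,
            H α β γ * (![-c, w1, w2] α * qu) * (pd β v p - ![-c, w1, w2] β * qv) * pd γ w p)
        linarith [hb1, hb2, hb3]
    _ = M * K * J * ((a1 + a4) + L * (a2 + a4) + L ^ 2 * (a3 + a4)) := hsum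
    _ ≤ M * K * J * (3 * (1 + L) ^ 2 * (a1 + a2 + a3 + a4)) :=
        mul_le_mul_of_nonneg_left hbr hMKJ
    _ = (3 * M * K * (1 + L) ^ 2) * (J * (a1 + a2 + a3 + a4)) := by ring
    _ ≤ (1 + 3 * M * K * (1 + L) ^ 2) * J * (a1 + a2 + a3 + a4) := by
        have hS0 : 0 ≤ a1 + a2 + a3 + a4 := by linarith
        have hexp : (1 + 3 * M * K * (1 + L) ^ 2) * J * (a1 + a2 + a3 + a4)
            = (3 * M * K * (1 + L) ^ 2) * (J * (a1 + a2 + a3 + a4))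
              + J * (a1 + a2 + a3 + a4) := by ring
        rw [hexp]
        linarith [mul_nonneg hJ0 hS0]
end

section
/- There exists a constant C > 0 such that for every smooth compactly supported function u : ℝ² → ℝ and every x ∈ ℝ², ⟨|x|⟩^{1/2} |u(x)| ≤ C ∑_{|a| ≤ 2} ‖D^a u‖_{L²(ℝ²)}, where the sum is over multi-indices a built from the partial derivatives ∂_1, ∂_2 and the rotation Ω = x¹∂_2 - x²∂_1 of total length at most 2, and ⟨|x|⟩ = √(1 + |x|²). -/
open MeasureTheory

noncomputable def pd2 (i : Fin 2) (u : EuclideanSpace ℝ (Fin 2) → ℝ)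
    (x : EuclideanSpace ℝ (Fin 2)) : ℝ :=
  fderiv ℝ u x (EuclideanSpace.single i 1)

/-- The rotation field `Ω = x¹∂_2 - x²∂_1` on `ℝ²`. -/
noncomputable def Om2 (u : EuclideanSpace ℝ (Fin 2) → ℝ)
    (x : EuclideanSpace ℝ (Fin 2)) : ℝ :=
  x 0 * pd2 1 u x - x 1 * pd2 0 u x

/-- The three fields `∂_1, ∂_2, Ω`. -/
noncomputable def Dfield : Fin 3 → (EuclideanSpace ℝ (Fin 2) → ℝ) →
    EuclideanSpace ℝ (Fin 2) → ℝ :=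
  ![pd2 0, pd2 1, Om2]

noncomputable def L2norm (u : EuclideanSpace ℝ (Fin 2) → ℝ) : ℝ :=
  (eLpNorm u 2 volume).toReal

section KSaux

open Set Real
open scoped ENNReal

local notation "E2" => EuclideanSpace ℝ (Fin 2)

/-- Identification of `ℝ × ℝ` with `EuclideanSpace ℝ (Fin 2)`. -/
noncomputable def toE2 : (ℝ × ℝ) ≃ᵐ EuclideanSpace ℝ (Fin 2) :=
  MeasurableEquiv.finTwoArrow.symm.trans (MeasurableEquiv.toLp 2 (Fin 2 → ℝ))

lemma measurePreserving_toE2 : MeasurePreserving toE2 volume volume :=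
  ((EuclideanSpace.volume_preserving_symm_measurableEquiv_toLp (Fin 2)).symm).comp
    ((volume_preserving_finTwoArrow ℝ).symm _)

lemma toE2_apply (p : ℝ × ℝ) (i : Fin 2) : toE2 p i = ![p.1, p.2] i := rfl

@[simp] lemma toE2_apply0 (p : ℝ × ℝ) : toE2 p 0 = p.1 := rfl
@[simp] lemma toE2_apply1 (p : ℝ × ℝ) : toE2 p 1 = p.2 := rfl

lemma toE2_coords (x : E2) : toE2 (x 0, x 1) = x := by
  apply PiLp.ext
  intro i
  fin_cases i <;> rfl

lemma toE2_smul_add (a b : ℝ) :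
    toE2 (a, b) = a • toE2 (1, 0) + b • toE2 (0, 1) := by
  apply PiLp.ext
  intro i
  fin_cases i <;> simp [toE2_apply]

lemma toE2_one_zero : toE2 (1, 0) = EuclideanSpace.single (0 : Fin 2) (1 : ℝ) := by
  apply PiLp.ext
  intro i
  fin_cases i <;> simp [toE2_apply, EuclideanSpace.single_apply]

lemma toE2_zero_one : toE2 (0, 1) = EuclideanSpace.single (1 : Fin 2) (1 : ℝ) := by
  apply PiLp.ext
  intro i
  fin_cases i <;> simp [toE2_apply, EuclideanSpace.single_apply]

lemma continuous_toE2 : Continuous toE2 := by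
  have : Continuous fun p : ℝ × ℝ =>
      (p.1 • toE2 (1, 0) + p.2 • toE2 (0, 1) : E2) := by
    exact (continuous_fst.smul continuous_const).add (continuous_snd.smul continuous_const)
  convert this using 1
  funext p
  exact toE2_smul_add p.1 p.2

lemma norm_toE2 (p : ℝ × ℝ) : ‖toE2 p‖ = Real.sqrt (p.1 ^ 2 + p.2 ^ 2) := by
  rw [EuclideanSpace.norm_eq]
  congr 1
  rw [Fin.sum_univ_two]
  simp [sq_abs]

lemma clm_apply_toE2 (L : E2 →L[ℝ] ℝ) (a b : ℝ) :
    L (toE2 (a, b)) = a * L (EuclideanSpace.single (0 : Fin 2) (1 : ℝ))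
      + b * L (EuclideanSpace.single (1 : Fin 2) (1 : ℝ)) := by
  rw [toE2_smul_add, map_add, _root_.map_smul, _root_.map_smul, toE2_one_zero, toE2_zero_one,
    smul_eq_mul, smul_eq_mul]


variable {u v : EuclideanSpace ℝ (Fin 2) → ℝ}

lemma contDiff_pd2 (hu : ContDiff ℝ (⊤ : ℕ∞) u) (i : Fin 2) : ContDiff ℝ (⊤ : ℕ∞) (pd2 i u) :=
  (hu.fderiv_right ((by simp))).clm_apply contDiff_const

lemma cont_pd2 (hu : ContDiff ℝ (⊤ : ℕ∞) u) (i : Fin 2) : Continuous (pd2 i u) :=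
  (contDiff_pd2 hu i).continuous

lemma vanish_pd2 {y : E2} (hy : y ∉ tsupport u) (i : Fin 2) : pd2 i u y = 0 := by
  have : fderiv ℝ u y = 0 := by
    by_contra h
    exact hy (support_fderiv_subset ℝ h)
  simp [pd2, this]

lemma hcs_pd2 (hs : HasCompactSupport u) (i : Fin 2) : HasCompactSupport (pd2 i u) := by
  apply HasCompactSupport.intro hs
  intro y hy
  exact vanish_pd2 hy i

lemma contDiff_coord (i : Fin 2) : ContDiff ℝ (⊤ : ℕ∞) (fun x : E2 => x i) :=
  (EuclideanSpace.proj (𝕜 := ℝ) i).contDiff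

lemma contDiff_Om2 (hu : ContDiff ℝ (⊤ : ℕ∞) u) : ContDiff ℝ (⊤ : ℕ∞) (Om2 u) := by
  unfold Om2
  exact ((contDiff_coord 0).mul (contDiff_pd2 hu 1)).sub
    ((contDiff_coord 1).mul (contDiff_pd2 hu 0))

lemma cont_Om2 (hu : ContDiff ℝ (⊤ : ℕ∞) u) : Continuous (Om2 u) := (contDiff_Om2 hu).continuous

lemma vanish_Om2 {y : E2} (hy : y ∉ tsupport u) : Om2 u y = 0 := by
  simp [Om2, vanish_pd2 hy]

lemma hcs_Om2 (hs : HasCompactSupport u) : HasCompactSupport (Om2 u) := by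
  apply HasCompactSupport.intro hs
  intro y hy
  exact vanish_Om2 hy

lemma tsupport_Om2_subset : tsupport (Om2 u) ⊆ tsupport u := by
  apply closure_minimal _ (isClosed_tsupport u)
  intro y hy
  by_contra h
  exact hy (vanish_Om2 h)

lemma tsupport_pd2_subset (i : Fin 2) : tsupport (pd2 i u) ⊆ tsupport u := by
  apply closure_minimal _ (isClosed_tsupport u)
  intro y hy
  by_contra h
  exact hy (vanish_pd2 h i)

lemma L2norm_nonneg (v : E2 → ℝ) : 0 ≤ L2norm v := ENNReal.toReal_nonneg

lemma integral_sq_eq (hv : Continuous v) (hs : HasCompactSupport v) :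
    ∫ x : E2, v x ^ 2 = L2norm v ^ 2 := by
  have hm : MemLp v 2 (volume : Measure E2) := hv.memLp_of_hasCompactSupport hs
  have h2 := hm.eLpNorm_eq_integral_rpow_norm (by norm_num) (by norm_num)
  have htr : ((2 : ℝ≥0∞)).toReal = (2 : ℝ) := by norm_num
  rw [htr] at h2
  have hI : ∀ x : E2, ‖v x‖ ^ (2 : ℝ) = v x ^ 2 := by
    intro x
    rw [Real.rpow_two, Real.norm_eq_abs, sq_abs]
  have hIeq : (∫ x : E2, ‖v x‖ ^ (2 : ℝ)) = ∫ x : E2, v x ^ 2 := by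
    congr 1; funext x; exact hI x
  have hnn : (0:ℝ) ≤ (∫ x : E2, ‖v x‖ ^ (2 : ℝ)) ^ (2 : ℝ)⁻¹ :=
    Real.rpow_nonneg (integral_nonneg (fun x => Real.rpow_nonneg (norm_nonneg _) _)) _
  have : L2norm v = (∫ x : E2, ‖v x‖ ^ (2 : ℝ)) ^ (2 : ℝ)⁻¹ := by
    rw [L2norm, h2, ENNReal.toReal_ofReal hnn]
  rw [this, ← hIeq]
  have hnn2 : (0:ℝ) ≤ ∫ x : E2, ‖v x‖ ^ (2 : ℝ) :=
    integral_nonneg (fun x => Real.rpow_nonneg (norm_nonneg _) _)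
  rw [← Real.rpow_natCast ((∫ x : E2, ‖v x‖ ^ (2 : ℝ)) ^ (2:ℝ)⁻¹) 2, ← Real.rpow_mul hnn2]
  norm_num

lemma l2_CS {f g : E2 → ℝ} (hf : Continuous f) (hfs : HasCompactSupport f)
    (hg : Continuous g) (hgs : HasCompactSupport g) :
    ∫ x : E2, |f x * g x| ≤ L2norm f * L2norm g := by
  have hconj : Real.HolderConjugate 2 2 := ⟨by norm_num, by norm_num, by norm_num⟩
  have hmf : MemLp (fun x : E2 => |f x|) (ENNReal.ofReal 2) volume := by
    have : ENNReal.ofReal 2 = 2 := by norm_num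
    rw [this]
    exact (hf.abs.memLp_of_hasCompactSupport (hfs.abs))
  have hmg : MemLp (fun x : E2 => |g x|) (ENNReal.ofReal 2) volume := by
    have : ENNReal.ofReal 2 = 2 := by norm_num
    rw [this]
    exact (hg.abs.memLp_of_hasCompactSupport (hgs.abs))
  have h := integral_mul_le_Lp_mul_Lq_of_nonneg hconj
    (Filter.Eventually.of_forall (fun x => abs_nonneg (f x)))
    (Filter.Eventually.of_forall (fun x => abs_nonneg (g x))) hmf hmg
  have hL : (∫ x : E2, |f x| * |g x|) = ∫ x : E2, |f x * g x| := by
    congr 1; funext x; rw [abs_mul]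
  rw [hL] at h
  refine h.trans (le_of_eq ?_)
  have habs : ∀ (h : E2 → ℝ), (∫ x : E2, |h x| ^ (2:ℝ)) = ∫ x : E2, h x ^ 2 := by
    intro h
    congr 1; funext x
    rw [Real.rpow_two, sq_abs]
  have key : ∀ (h : E2 → ℝ), Continuous h → HasCompactSupport h →
      (∫ x : E2, |h x| ^ (2:ℝ)) ^ ((1:ℝ)/2) = L2norm h := by
    intro h hc hcs
    rw [habs h, integral_sq_eq hc hcs, ← Real.sqrt_eq_rpow, Real.sqrt_sq (L2norm_nonneg h)]
  rw [key f hf hfs, key g hg hgs]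


section Deriv

lemma hasDerivAt_comp_toE2 (hv : ContDiff ℝ (⊤ : ℕ∞) v) {γ1 γ2 : ℝ → ℝ} {d1 d2 t : ℝ}
    (h1 : HasDerivAt γ1 d1 t) (h2 : HasDerivAt γ2 d2 t) :
    HasDerivAt (fun t => v (toE2 (γ1 t, γ2 t)))
      (d1 * pd2 0 v (toE2 (γ1 t, γ2 t)) + d2 * pd2 1 v (toE2 (γ1 t, γ2 t))) t := by
  have hγ : HasDerivAt (fun t => toE2 (γ1 t, γ2 t))
      (d1 • toE2 (1, 0) + d2 • toE2 (0, 1)) t := by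
    have h : HasDerivAt (fun t => (γ1 t • toE2 (1, 0) + γ2 t • toE2 (0, 1) : E2))
        (d1 • toE2 (1, 0) + d2 • toE2 (0, 1)) t :=
      (h1.smul_const _).add (h2.smul_const _)
    convert h using 1
    funext t
    exact toE2_smul_add (γ1 t) (γ2 t)
  have hfd := (hv.differentiable (by simp) (toE2 (γ1 t, γ2 t))).hasFDerivAt
  have h := hfd.comp_hasDerivAt t hγ
  refine h.congr_deriv ?_
  rw [map_add, _root_.map_smul, _root_.map_smul, toE2_one_zero, toE2_zero_one]
  simp only [smul_eq_mul]
  rfl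

lemma hasDerivAt_coord1 (hv : ContDiff ℝ (⊤ : ℕ∞) v) (b t : ℝ) :
    HasDerivAt (fun t => v (toE2 (t, b))) (pd2 0 v (toE2 (t, b))) t := by
  have h := hasDerivAt_comp_toE2 hv (hasDerivAt_id t) (hasDerivAt_const t b)
  simpa using h

lemma hasDerivAt_coord2 (hv : ContDiff ℝ (⊤ : ℕ∞) v) (a t : ℝ) :
    HasDerivAt (fun t => v (toE2 (a, t))) (pd2 1 v (toE2 (a, t))) t := by
  have h := hasDerivAt_comp_toE2 hv (hasDerivAt_const t a) (hasDerivAt_id t)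
  simpa using h

/-- Polar parametrization of the plane. -/
noncomputable def Pp (s θ : ℝ) : EuclideanSpace ℝ (Fin 2) := toE2 (s * Real.cos θ, s * Real.sin θ)

lemma norm_Pp (s θ : ℝ) : ‖Pp s θ‖ = |s| := by
  rw [Pp, norm_toE2]
  have h : (s * Real.cos θ) ^ 2 + (s * Real.sin θ) ^ 2 = s ^ 2 := by
    have := Real.sin_sq_add_cos_sq θ
    nlinarith
  rw [h, Real.sqrt_sq_eq_abs]

lemma hasDerivAt_radial (hv : ContDiff ℝ (⊤ : ℕ∞) v) (θ s : ℝ) :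
    HasDerivAt (fun t => v (Pp t θ))
      (Real.cos θ * pd2 0 v (Pp s θ) + Real.sin θ * pd2 1 v (Pp s θ)) s := by
  have h := hasDerivAt_comp_toE2 hv ((hasDerivAt_id s).mul_const (Real.cos θ))
    ((hasDerivAt_id s).mul_const (Real.sin θ))
  simpa [Pp] using h

lemma hasDerivAt_angular (hv : ContDiff ℝ (⊤ : ℕ∞) v) (s θ : ℝ) :
    HasDerivAt (fun φ => v (Pp s φ)) (Om2 v (Pp s θ)) θ := by
  have h := hasDerivAt_comp_toE2 hv ((Real.hasDerivAt_cos θ).const_mul s)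
    ((Real.hasDerivAt_sin θ).const_mul s)
  simp only [Pp]
  convert h using 1
  rw [Om2]
  simp only [toE2_apply0, toE2_apply1]
  ring

end Deriv

section IntHelp

lemma fst_abs_le_norm_toE2 (p : ℝ × ℝ) : |p.1| ≤ ‖toE2 p‖ := by
  rw [norm_toE2]
  rw [← Real.sqrt_sq_eq_abs]
  exact Real.sqrt_le_sqrt (by nlinarith [sq_nonneg p.2])

lemma snd_abs_le_norm_toE2 (p : ℝ × ℝ) : |p.2| ≤ ‖toE2 p‖ := by
  rw [norm_toE2]
  rw [← Real.sqrt_sq_eq_abs]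
  exact Real.sqrt_le_sqrt (by nlinarith [sq_nonneg p.1])

lemma exists_R (hs : HasCompactSupport u) :
    ∃ R : ℝ, 1 ≤ R ∧ ∀ y : E2, R ≤ ‖y‖ → y ∉ tsupport u := by
  obtain ⟨R₀, hR₀⟩ := hs.isBounded.subset_closedBall 0
  refine ⟨max 1 (R₀ + 1), le_max_left _ _, fun y hy hmem => ?_⟩
  have h1 : ‖y‖ ≤ R₀ := by simpa [Metric.mem_closedBall, dist_zero_right] using hR₀ hmem
  have h2 : R₀ + 1 ≤ ‖y‖ := le_trans (le_max_right _ _) hy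
  linarith

lemma integrableOn_Ioi_of_vanish {h : ℝ → ℝ} (hc : Continuous h) {R r : ℝ}
    (hv : ∀ s, R ≤ s → h s = 0) : IntegrableOn h (Ioi r) := by
  set M := max r R with hM
  have h1 : IntegrableOn h (Ioc r M) :=
    (hc.integrableOn_Icc (a := r) (b := M) (μ := volume)).mono_set Ioc_subset_Icc_self
  have h2 : IntegrableOn h (Ioi M) := by
    refine (integrableOn_zero (μ := volume)).congr_fun (fun s hs => ?_) measurableSet_Ioi
    exact (hv s (le_of_lt (lt_of_le_of_lt (le_max_right r R) hs))).symm
  have := h1.union h2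
  rwa [Ioc_union_Ioi_eq_Ioi (le_max_left r R)] at this

lemma setIntegral_Ioi_eq_interval {h : ℝ → ℝ} (hc : Continuous h) {R r : ℝ} (hrR : r ≤ R)
    (hv : ∀ s, R ≤ s → h s = 0) : ∫ s in Ioi r, h s = ∫ s in r..R, h s := by
  rw [intervalIntegral.integral_of_le hrR]
  rw [← Ioc_union_Ioi_eq_Ioi hrR,
    setIntegral_union (Ioc_disjoint_Ioi le_rfl) measurableSet_Ioi
      ((hc.integrableOn_Icc (a := r) (b := R) (μ := volume)).mono_set Ioc_subset_Icc_self)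
      (by
        refine (integrableOn_zero (μ := volume)).congr_fun (fun s hs => ?_) measurableSet_Ioi
        exact (hv s (le_of_lt hs)).symm)]
  have : ∫ s in Ioi R, h s = 0 := by
    apply setIntegral_eq_zero_of_forall_eq_zero
    intro s hs
    exact hv s (le_of_lt hs)
  rw [this, add_zero]

lemma ftc_abs {f f' : ℝ → ℝ} (hd : ∀ s, HasDerivAt f (f' s) s) (hc : Continuous f')
    {R : ℝ} (hfv : ∀ s, R ≤ s → f s = 0) (hfv' : ∀ s, R ≤ s → f' s = 0) (r : ℝ) :
    |f r| ≤ ∫ s in Ioi r, |f' s| := by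
  set M := max r R with hM
  have hft : ∫ s in r..M, f' s = f M - f r :=
    intervalIntegral.integral_eq_sub_of_hasDerivAt (fun x _ => hd x)
      (hc.intervalIntegrable _ _)
  have hfM : f M = 0 := hfv M (le_max_right _ _)
  have h1 : |f r| = |∫ s in r..M, f' s| := by rw [hft, hfM]; rw [zero_sub, abs_neg]
  rw [h1]
  calc |∫ s in r..M, f' s| ≤ ∫ s in r..M, |f' s| :=
        intervalIntegral.abs_integral_le_integral_abs (le_max_left _ _)
    _ = ∫ s in Ioi r, |f' s| := by
        rw [setIntegral_Ioi_eq_interval hc.abs (le_max_left r R)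
          (fun s hs => by rw [hfv' s (le_trans (le_max_right r R) hs), abs_zero])]

lemma circle_bound {f f' : ℝ → ℝ} (hd : ∀ θ, HasDerivAt f (f' θ) θ) (hc' : Continuous f')
    {θ₀ : ℝ} (h₀ : θ₀ ∈ Icc (-π) π) :
    f θ₀ ≤ (2 * π)⁻¹ * (∫ θ in (-π)..π, f θ) + ∫ θ in (-π)..π, |f' θ| := by
  have hfc : Continuous f := by
    rw [continuous_iff_continuousAt]
    exact fun θ => (hd θ).continuousAt
  have hpi : -π ≤ π := by linarith [Real.pi_pos]
  obtain ⟨θ₁, hθ₁, hmin⟩ := isCompact_Icc.exists_isMinOn (nonempty_Icc.2 hpi)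
    hfc.continuousOn
  have hint : 2 * π * f θ₁ ≤ ∫ θ in (-π)..π, f θ := by
    have h := intervalIntegral.integral_mono_on (μ := volume) hpi intervalIntegrable_const
      (hfc.intervalIntegrable _ _) (fun x hx => hmin hx)
    rw [intervalIntegral.integral_const] at h
    simp only [smul_eq_mul] at h
    calc 2 * π * f θ₁ = (π - -π) * f θ₁ := by ring
      _ ≤ _ := h
  have hftc : f θ₀ - f θ₁ = ∫ θ in θ₁..θ₀, f' θ :=
    (intervalIntegral.integral_eq_sub_of_hasDerivAt (fun x _ => hd x)
      (hc'.intervalIntegrable _ _)).symm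
  have habs : |∫ θ in θ₁..θ₀, f' θ| ≤ ∫ θ in (-π)..π, |f' θ| := by
    have h1 : |∫ θ in θ₁..θ₀, f' θ| ≤ |(∫ θ in θ₁..θ₀, (fun a => |f' a|) θ)| := by
      simpa [Real.norm_eq_abs] using
        intervalIntegral.norm_integral_le_abs_integral_norm (f := f') (a := θ₁) (b := θ₀)
          (μ := volume)
    have h2 : |(∫ θ in θ₁..θ₀, (fun a => |f' a|) θ)| ≤ |(∫ θ in (-π)..π, (fun a => |f' a|) θ)| := by
      apply intervalIntegral.abs_integral_mono_interval
      · rw [uIoc_of_le hpi, uIoc]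
        exact Ioc_subset_Ioc (le_min hθ₁.1 h₀.1) (max_le hθ₁.2 h₀.2)
      · exact Filter.Eventually.of_forall (fun x => abs_nonneg _)
      · exact (hc'.abs.intervalIntegrable _ _)
    have h3 : |(∫ θ in (-π)..π, (fun a => |f' a|) θ)| = ∫ θ in (-π)..π, |f' θ| := by
      apply abs_of_nonneg
      exact intervalIntegral.integral_nonneg hpi (fun x _ => abs_nonneg _)
    calc |∫ θ in θ₁..θ₀, f' θ| ≤ _ := h1
      _ ≤ _ := h2
      _ = _ := h3
  have hθ1le : f θ₁ ≤ (2 * π)⁻¹ * (∫ θ in (-π)..π, f θ) := by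
    rw [inv_mul_eq_div, le_div_iff₀ (by positivity : 0 < 2 * π)]
    linarith
  have h4 : f θ₀ = f θ₁ + ∫ θ in θ₁..θ₀, f' θ := by linarith
  have h5 : f θ₀ ≤ f θ₁ + |∫ θ in θ₁..θ₀, f' θ| := by
    rw [h4]
    exact add_le_add_right (le_abs_self _) _
  linarith

lemma integrableOn_of_support_subset_compact {h : ℝ × ℝ → ℝ} (hc : Continuous h)
    {T Q : Set (ℝ × ℝ)} (hT : MeasurableSet T) (hQ : IsCompact Q)
    (hsub : T ∩ Function.support h ⊆ Q) : IntegrableOn h T := by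
  have h1 : IntegrableOn h (T ∩ Q) :=
    (hc.continuousOn.integrableOn_compact hQ).mono_set inter_subset_right
  have h2 : IntegrableOn h (T \ Q) := by
    refine (integrableOn_zero (μ := volume)).congr_fun (fun p hp => ?_) (hT.diff hQ.measurableSet)
    by_contra hne
    exact hp.2 (hsub ⟨hp.1, fun hz => hne (by rw [hz])⟩)
  have := h1.union h2
  rwa [inter_union_diff] at this

end IntHelp


section CartBound

lemma cart_bound (hu : ContDiff ℝ (⊤ : ℕ∞) u) (hs : HasCompactSupport u) (x : E2) :
    u x ^ 2 ≤ ∫ y : E2, 2 * (|pd2 1 u y| * |pd2 0 u y| + |u y| * |pd2 1 (pd2 0 u) y|) := by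
  obtain ⟨R, hR1, hR⟩ := exists_R hs
  set G : E2 → ℝ := fun y => 2 * u y * pd2 0 u y with hGdef
  set H : E2 → ℝ := fun y => 2 * (pd2 1 u y * pd2 0 u y + u y * pd2 1 (pd2 0 u) y) with hHdef
  set Hb : E2 → ℝ := fun y => 2 * (|pd2 1 u y| * |pd2 0 u y| + |u y| * |pd2 1 (pd2 0 u) y|)
    with hHbdef
  have hGc : Continuous G := (continuous_const.mul hu.continuous).mul (cont_pd2 hu 0)
  have hHc : Continuous H := continuous_const.mul
    (((cont_pd2 hu 1).mul (cont_pd2 hu 0)).add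
      (hu.continuous.mul (cont_pd2 (contDiff_pd2 hu 0) 1)))
  have hvanG : ∀ y : E2, y ∉ tsupport u → G y = 0 := by
    intro y hy
    simp [hGdef, image_eq_zero_of_notMem_tsupport hy]
  have hvanH : ∀ y : E2, y ∉ tsupport u → H y = 0 := by
    intro y hy
    have h2 : y ∉ tsupport (pd2 0 u) := fun hc => hy (tsupport_pd2_subset 0 hc)
    simp [hHdef, image_eq_zero_of_notMem_tsupport hy, vanish_pd2 hy, vanish_pd2 h2]
  have hvanHb : ∀ y : E2, y ∉ tsupport u → Hb y = 0 := by
    intro y hy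
    have h2 : y ∉ tsupport (pd2 0 u) := fun hc => hy (tsupport_pd2_subset 0 hc)
    simp [hHbdef, image_eq_zero_of_notMem_tsupport hy, vanish_pd2 hy, vanish_pd2 h2]
  have hvan1 : ∀ t c : ℝ, R ≤ |t| → toE2 (t, c) ∉ tsupport u :=
    fun t c ht => hR _ (le_trans ht (fst_abs_le_norm_toE2 (t, c)))
  have hvan2 : ∀ t c : ℝ, R ≤ |c| → toE2 (t, c) ∉ tsupport u :=
    fun t c hc => hR _ (le_trans hc (snd_abs_le_norm_toE2 (t, c)))
  set a := x 0
  set b := x 1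
  -- Step A : inner FTC
  have stepA : ∀ t : ℝ, |G (toE2 (t, b))| ≤ ∫ c in Ioi b, |H (toE2 (t, c))| := by
    intro t
    refine ftc_abs (f := fun c => G (toE2 (t, c))) (f' := fun c => H (toE2 (t, c)))
      (fun c => ?_) (hHc.comp (continuous_toE2.comp (continuous_const.prodMk continuous_id)))
      (R := R) (fun c hc => hvanG _ (hvan2 t c (le_trans hc (le_abs_self c))))
      (fun c hc => hvanH _ (hvan2 t c (le_trans hc (le_abs_self c)))) b
    have h1 := hasDerivAt_coord2 hu t c
    have h2 := hasDerivAt_coord2 (contDiff_pd2 hu 0) t c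
    have h := (h1.const_mul (2 : ℝ)).mul h2
    refine h.congr_deriv ?_
    simp only [hGdef, hHdef]
    ring
  -- Step B : outer FTC
  have stepB : u x ^ 2 ≤ ∫ t in Ioi a, |G (toE2 (t, b))| := by
    have hd : ∀ t, HasDerivAt (fun t => u (toE2 (t, b)) ^ 2) (G (toE2 (t, b))) t := by
      intro t
      have h := (hasDerivAt_coord1 hu b t).pow 2
      refine h.congr_deriv ?_
      simp only [hGdef]
      push_cast
      ring
    have h := ftc_abs (f := fun t => u (toE2 (t, b)) ^ 2) (f' := fun t => G (toE2 (t, b)))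
      hd (hGc.comp (continuous_toE2.comp (continuous_id.prodMk continuous_const)))
      (R := R) (fun t ht => by
        simp [image_eq_zero_of_notMem_tsupport (hvan1 t b (le_trans ht (le_abs_self t)))])
      (fun t ht => hvanG _ (hvan1 t b (le_trans ht (le_abs_self t)))) a
    have hx : toE2 (a, b) = x := toE2_coords x
    rw [hx] at h
    calc u x ^ 2 = |u x ^ 2| := (abs_of_nonneg (sq_nonneg _)).symm
      _ ≤ _ := h
  -- Step C : combine
  have hinnerint : ∀ t : ℝ, (∫ c in Ioi b, |H (toE2 (t, c))|) = ∫ c in b..(max b R), |H (toE2 (t, c))| := by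
    intro t
    exact setIntegral_Ioi_eq_interval (h := fun c => |H (toE2 (t, c))|)
      (by exact (hHc.comp (continuous_toE2.comp (continuous_const.prodMk continuous_id))).abs)
      (le_max_left _ _)
      (fun c hc => by
        show |H (toE2 (t, c))| = 0
        rw [hvanH _ (hvan2 t c (le_trans (le_max_right b R) (le_trans hc (le_abs_self c))))]
        exact abs_zero)
  have hmajc : Continuous (fun t => ∫ c in Ioi b, |H (toE2 (t, c))|) := by
    have hco : Continuous (fun t => ∫ c in b..(max b R), |H (toE2 (t, c))|) := by
      apply intervalIntegral.continuous_parametric_intervalIntegral_of_continuous'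
      exact (hHc.comp continuous_toE2).abs
    simpa only [← hinnerint] using hco
  have stepC1 : (∫ t in Ioi a, |G (toE2 (t, b))|) ≤
      ∫ t in Ioi a, (∫ c in Ioi b, |H (toE2 (t, c))|) := by
    apply setIntegral_mono_on
    · exact integrableOn_Ioi_of_vanish (h := fun t => |G (toE2 (t, b))|) (R := R)
        (by exact (hGc.comp (continuous_toE2.comp (continuous_id.prodMk continuous_const))).abs)
        (fun t ht => by
          show |G (toE2 (t, b))| = 0
          rw [hvanG _ (hvan1 t b (le_trans ht (le_abs_self t)))]; exact abs_zero)
    · apply integrableOn_Ioi_of_vanish hmajc (R := R)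
      intro t ht
      rw [hinnerint t]
      have : ∀ c : ℝ, |H (toE2 (t, c))| = 0 := by
        intro c
        rw [hvanH _ (hvan1 t c (le_trans ht (le_abs_self t)))]
        exact abs_zero
      simp only [this]
      exact intervalIntegral.integral_zero
    · exact measurableSet_Ioi
    · exact fun t _ => stepA t
  -- product
  set F : ℝ × ℝ → ℝ := fun p => |H (toE2 p)| with hFdef
  have hFc : Continuous F := (hHc.comp continuous_toE2).abs
  have hFcs : HasCompactSupport F := by
    apply HasCompactSupport.intro (isCompact_Icc.prod (isCompact_Icc :
      IsCompact (Icc (-R) R))) (f := F)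
    intro p hp
    rw [Set.mem_prod] at hp
    push_neg at hp
    have : toE2 p ∉ tsupport u := by
      by_cases h1 : p.1 ∈ Icc (-R) R
      · have h2 := hp h1
        rw [mem_Icc] at h2
        push_neg at h2
        apply hvan2 p.1 p.2
        rcases le_or_gt (-R) p.2 with hc | hc
        · exact le_trans (le_of_lt (h2 hc)) (le_abs_self _)
        · rw [abs_of_neg (by linarith : p.2 < 0)]
          linarith
      · rw [mem_Icc] at h1
        push_neg at h1
        apply hvan1 p.1 p.2
        rcases le_or_gt (-R) p.1 with hc | hc
        · exact le_trans (le_of_lt (h1 hc)) (le_abs_self _)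
        · rw [abs_of_neg (by linarith : p.1 < 0)]
          linarith
    simp [hFdef, hvanH _ this]
  have hFi : Integrable F := hFc.integrable_of_hasCompactSupport hFcs
  have stepC2 : (∫ t in Ioi a, (∫ c in Ioi b, |H (toE2 (t, c))|)) = ∫ p in Ioi a ×ˢ Ioi b, F p := by
    rw [Measure.volume_eq_prod]
    exact (setIntegral_prod F (hFi.integrableOn)).symm
  have stepC3 : (∫ p in Ioi a ×ˢ Ioi b, F p) ≤ ∫ p : ℝ × ℝ, F p :=
    setIntegral_le_integral hFi (Filter.Eventually.of_forall (fun p => abs_nonneg _))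
  have stepC4 : (∫ p : ℝ × ℝ, F p) = ∫ y : E2, |H y| := by
    simp only [hFdef]
    exact measurePreserving_toE2.integral_comp toE2.measurableEmbedding (fun y => |H y|)
  have stepC5 : (∫ y : E2, |H y|) ≤ ∫ y : E2, Hb y := by
    apply integral_mono
    · exact (hHc.abs).integrable_of_hasCompactSupport
        ((HasCompactSupport.intro hs hvanH).abs)
    · refine Continuous.integrable_of_hasCompactSupport ?_ (HasCompactSupport.intro hs hvanHb)
      exact continuous_const.mul
        ((((cont_pd2 hu 1).abs).mul ((cont_pd2 hu 0).abs)).add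
          ((hu.continuous.abs).mul ((cont_pd2 (contDiff_pd2 hu 0) 1).abs)))
    · intro y
      simp only [hHdef, hHbdef]
      calc |2 * (pd2 1 u y * pd2 0 u y + u y * pd2 1 (pd2 0 u) y)|
          = 2 * |pd2 1 u y * pd2 0 u y + u y * pd2 1 (pd2 0 u) y| := by
            rw [abs_mul]; norm_num
        _ ≤ 2 * (|pd2 1 u y * pd2 0 u y| + |u y * pd2 1 (pd2 0 u) y|) := by
            have := abs_add_le (pd2 1 u y * pd2 0 u y) (u y * pd2 1 (pd2 0 u) y)
            linarith
        _ = 2 * (|pd2 1 u y| * |pd2 0 u y| + |u y| * |pd2 1 (pd2 0 u) y|) := by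
            rw [abs_mul, abs_mul]
  calc u x ^ 2 ≤ ∫ t in Ioi a, |G (toE2 (t, b))| := stepB
    _ ≤ ∫ t in Ioi a, (∫ c in Ioi b, |H (toE2 (t, c))|) := stepC1
    _ = ∫ p in Ioi a ×ˢ Ioi b, F p := stepC2
    _ ≤ ∫ p : ℝ × ℝ, F p := stepC3
    _ = ∫ y : E2, |H y| := stepC4
    _ ≤ _ := stepC5

end CartBound


section PolarBound

lemma abs_trig_comb (θ a b : ℝ) : |Real.cos θ * a + Real.sin θ * b| ≤ |a| + |b| := by
  calc |Real.cos θ * a + Real.sin θ * b| ≤ |Real.cos θ * a| + |Real.sin θ * b| := abs_add_le _ _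
    _ = |Real.cos θ| * |a| + |Real.sin θ| * |b| := by rw [abs_mul, abs_mul]
    _ ≤ 1 * |a| + 1 * |b| := by
        have h1 := Real.abs_cos_le_one θ
        have h2 := Real.abs_sin_le_one θ
        have := abs_nonneg a
        have := abs_nonneg b
        nlinarith
    _ = |a| + |b| := by ring

set_option maxHeartbeats 2000000 in
lemma polar_bound (hu : ContDiff ℝ (⊤ : ℕ∞) u) (hs : HasCompactSupport u) (x : E2) (hx : 1 ≤ ‖x‖) :
    ‖x‖ * u x ^ 2 ≤ ∫ y : E2,
      (u y ^ 2 + 2 * |u y| * (|pd2 0 u y| + |pd2 1 u y|)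
        + (2 * |u y| * |Om2 u y| + 2 * (|pd2 0 u y| + |pd2 1 u y|) * |Om2 u y|
          + 2 * |u y| * (|pd2 0 (Om2 u) y| + |pd2 1 (Om2 u) y|))) := by
  obtain ⟨R, hR1, hR⟩ := exists_R hs
  set Cw : E2 → ℝ := fun y =>
      (u y ^ 2 + 2 * |u y| * (|pd2 0 u y| + |pd2 1 u y|)
        + (2 * |u y| * |Om2 u y| + 2 * (|pd2 0 u y| + |pd2 1 u y|) * |Om2 u y|
          + 2 * |u y| * (|pd2 0 (Om2 u) y| + |pd2 1 (Om2 u) y|))) with hCwdef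
  have hCwnn : ∀ y, 0 ≤ Cw y := by
    intro y
    have := sq_nonneg (u y)
    have := abs_nonneg (u y)
    have := abs_nonneg (pd2 0 u y)
    have := abs_nonneg (pd2 1 u y)
    have := abs_nonneg (Om2 u y)
    have := abs_nonneg (pd2 0 (Om2 u) y)
    have := abs_nonneg (pd2 1 (Om2 u) y)
    simp only [hCwdef]
    positivity
  have hCwc : Continuous Cw := by
    simp only [hCwdef]
    refine ((((hu.continuous.pow 2).add
      ((continuous_const.mul hu.continuous.abs).mul
        ((cont_pd2 hu 0).abs.add (cont_pd2 hu 1).abs)))).add ?_)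
    refine (((continuous_const.mul hu.continuous.abs).mul (cont_Om2 hu).abs).add
      ((continuous_const.mul ((cont_pd2 hu 0).abs.add (cont_pd2 hu 1).abs)).mul
        (cont_Om2 hu).abs)).add
      ((continuous_const.mul hu.continuous.abs).mul
        ((cont_pd2 (contDiff_Om2 hu) 0).abs.add (cont_pd2 (contDiff_Om2 hu) 1).abs))
  have hCwvan : ∀ y : E2, y ∉ tsupport u → Cw y = 0 := by
    intro y hy
    have h2 : y ∉ tsupport (Om2 u) := fun hc => hy (tsupport_Om2_subset hc)
    simp [hCwdef, image_eq_zero_of_notMem_tsupport hy, vanish_pd2 hy, vanish_Om2 hy,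
      vanish_pd2 h2]
  -- choose polar angle
  set r := ‖x‖ with hrdef
  have hr0 : 0 < r := lt_of_lt_of_le one_pos hx
  set z : ℂ := Complex.mk (x 0) (x 1) with hzdef
  have hzabs : ‖z‖ = r := by
    rw [hrdef]
    rw [Complex.norm_def]
    have : ‖x‖ = Real.sqrt ((x 0) ^ 2 + (x 1) ^ 2) := by
      conv_lhs => rw [← toE2_coords x]
      exact norm_toE2 _
    rw [this]
    congr 1
    rw [Complex.normSq_mk]
    ring
  have hzne : z ≠ 0 := by
    intro h
    rw [h] at hzabs
    simp at hzabs
    exact absurd hzabs (by linarith)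
  set θ₀ := Complex.arg z with hθ₀def
  have hθ₀mem : θ₀ ∈ Icc (-π) π := ⟨(Complex.neg_pi_lt_arg z).le, Complex.arg_le_pi z⟩
  have hPx : Pp r θ₀ = x := by
    rw [Pp]
    have hcos : Real.cos θ₀ = (x 0) / r := by
      rw [hθ₀def, Complex.cos_arg hzne, hzabs]
    have hsin : Real.sin θ₀ = (x 1) / r := by
      rw [hθ₀def, Complex.sin_arg, hzabs]
    rw [hcos, hsin]
    rw [mul_div_cancel₀ _ (ne_of_gt hr0), mul_div_cancel₀ _ (ne_of_gt hr0)]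
    exact toE2_coords x
  -- vanishing off radius R
  have hPout : ∀ s θ : ℝ, R ≤ s → Pp s θ ∉ tsupport u := by
    intro s θ hsR
    apply hR
    rw [norm_Pp]
    exact le_trans hsR (le_abs_self s)
  -- derivative data
  set M := max r R with hMdef
  have hrM : r ≤ M := le_max_left _ _
  have hPq : Continuous (fun q : ℝ × ℝ => Pp q.2 q.1) := by
    apply continuous_toE2.comp
    exact (continuous_snd.mul (Real.continuous_cos.comp continuous_fst)).prodMk
      (continuous_snd.mul (Real.continuous_sin.comp continuous_fst))
  have hcompc : ∀ (v : E2 → ℝ), Continuous v → Continuous (fun q : ℝ × ℝ => v (Pp q.2 q.1)) :=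
    fun v hv => hv.comp hPq
  set Aψ : ℝ → ℝ → ℝ := fun θ s => u (Pp s θ) ^ 2
      + s * (2 * u (Pp s θ) * (Real.cos θ * pd2 0 u (Pp s θ) + Real.sin θ * pd2 1 u (Pp s θ)))
    with hAψdef
  set Aφ : ℝ → ℝ → ℝ := fun θ s => 2 * (u (Pp s θ) * Om2 u (Pp s θ))
      + (2 * s) * ((Real.cos θ * pd2 0 u (Pp s θ) + Real.sin θ * pd2 1 u (Pp s θ))
          * Om2 u (Pp s θ)
        + u (Pp s θ) * (Real.cos θ * pd2 0 (Om2 u) (Pp s θ)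
          + Real.sin θ * pd2 1 (Om2 u) (Pp s θ)))
    with hAφdef
  have hAψc : Continuous (fun q : ℝ × ℝ => Aψ q.1 q.2) := by
    simp only [hAψdef]
    refine ((hcompc u hu.continuous).pow 2).add (continuous_snd.mul ?_)
    refine (continuous_const.mul (hcompc u hu.continuous)).mul ?_
    exact ((Real.continuous_cos.comp continuous_fst).mul (hcompc _ (cont_pd2 hu 0))).add
      ((Real.continuous_sin.comp continuous_fst).mul (hcompc _ (cont_pd2 hu 1)))
  have hAφc : Continuous (fun q : ℝ × ℝ => Aφ q.1 q.2) := by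
    simp only [hAφdef]
    refine (continuous_const.mul ((hcompc u hu.continuous).mul
      (hcompc _ (cont_Om2 hu)))).add ((continuous_const.mul continuous_snd).mul ?_)
    refine ((((Real.continuous_cos.comp continuous_fst).mul (hcompc _ (cont_pd2 hu 0))).add
      ((Real.continuous_sin.comp continuous_fst).mul (hcompc _ (cont_pd2 hu 1)))).mul
      (hcompc _ (cont_Om2 hu))).add ?_
    exact (hcompc u hu.continuous).mul
      (((Real.continuous_cos.comp continuous_fst).mul
        (hcompc _ (cont_pd2 (contDiff_Om2 hu) 0))).add
      ((Real.continuous_sin.comp continuous_fst).mul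
        (hcompc _ (cont_pd2 (contDiff_Om2 hu) 1))))
  have hAψvan : ∀ θ s : ℝ, R ≤ s → Aψ θ s = 0 := by
    intro θ s hsR
    have h := hPout s θ hsR
    simp [hAψdef, image_eq_zero_of_notMem_tsupport h]
  have hAφvan : ∀ θ s : ℝ, R ≤ s → Aφ θ s = 0 := by
    intro θ s hsR
    have h := hPout s θ hsR
    simp [hAφdef, image_eq_zero_of_notMem_tsupport h, vanish_Om2 h]
  -- step (ii): radial FTC for f
  have stepii : ∀ θ : ℝ, r * u (Pp r θ) ^ 2 ≤ ∫ s in Ioi r, |Aψ θ s| := by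
    intro θ
    have hd : ∀ s : ℝ, HasDerivAt (fun s => s * u (Pp s θ) ^ 2) (Aψ θ s) s := by
      intro s
      have h := (hasDerivAt_id s).mul ((hasDerivAt_radial hu θ s).pow 2)
      simp only [id_eq] at h
      refine h.congr_deriv ?_
      simp only [hAψdef, Pi.pow_apply]
      push_cast
      ring
    have h := ftc_abs (f := fun s => s * u (Pp s θ) ^ 2) (f' := fun s => Aψ θ s) hd
      (by exact hAψc.comp (continuous_const.prodMk continuous_id))
      (R := R) (fun s hsR => by
        simp [image_eq_zero_of_notMem_tsupport (hPout s θ hsR)])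
      (fun s hsR => hAψvan θ s hsR) r
    refine le_trans (le_trans (le_abs_self _) h) (le_of_eq rfl)
  -- step (iii): radial FTC for f'
  have stepiii : ∀ θ : ℝ, |r * (2 * u (Pp r θ) * Om2 u (Pp r θ))| ≤ ∫ s in Ioi r, |Aφ θ s| := by
    intro θ
    have hd : ∀ s : ℝ, HasDerivAt (fun s => (2 * s) * (u (Pp s θ) * Om2 u (Pp s θ)))
        (Aφ θ s) s := by
      intro s
      have h := ((hasDerivAt_id s).const_mul (2 : ℝ)).mul
        ((hasDerivAt_radial hu θ s).mul (hasDerivAt_radial (contDiff_Om2 hu) θ s))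
      simp only [id_eq] at h
      refine h.congr_deriv ?_
      simp only [hAφdef, Pi.mul_apply]
      ring
    have h := ftc_abs (f := fun s => (2 * s) * (u (Pp s θ) * Om2 u (Pp s θ)))
      (f' := fun s => Aφ θ s) hd
      (by exact hAφc.comp (continuous_const.prodMk continuous_id))
      (R := R) (fun s hsR => by
        simp [image_eq_zero_of_notMem_tsupport (hPout s θ hsR)])
      (fun s hsR => hAφvan θ s hsR) r
    have he : |r * (2 * u (Pp r θ) * Om2 u (Pp r θ))|
        = |(2 * r) * (u (Pp r θ) * Om2 u (Pp r θ))| := by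
      congr 1
      ring
    rw [he]
    exact h
  -- interval rewriting of inner integrals
  have hinnψ : ∀ θ : ℝ, (∫ s in Ioi r, |Aψ θ s|) = ∫ s in r..M, |Aψ θ s| := by
    intro θ
    exact setIntegral_Ioi_eq_interval (h := fun s => |Aψ θ s|)
      (by exact (hAψc.comp (continuous_const.prodMk continuous_id)).abs) hrM
      (fun s hsM => by
        show |Aψ θ s| = 0
        rw [hAψvan θ s (le_trans (le_max_right r R) hsM)]
        exact abs_zero)
  have hinnφ : ∀ θ : ℝ, (∫ s in Ioi r, |Aφ θ s|) = ∫ s in r..M, |Aφ θ s| := by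
    intro θ
    exact setIntegral_Ioi_eq_interval (h := fun s => |Aφ θ s|)
      (by exact (hAφc.comp (continuous_const.prodMk continuous_id)).abs) hrM
      (fun s hsM => by
        show |Aφ θ s| = 0
        rw [hAφvan θ s (le_trans (le_max_right r R) hsM)]
        exact abs_zero)
  have hparamψ : Continuous (fun θ => ∫ s in r..M, |Aψ θ s|) := by
    apply intervalIntegral.continuous_parametric_intervalIntegral_of_continuous'
    exact hAψc.abs
  have hparamφ : Continuous (fun θ => ∫ s in r..M, |Aφ θ s|) := by
    apply intervalIntegral.continuous_parametric_intervalIntegral_of_continuous'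
    exact hAφc.abs
  -- step (i): circle bound
  have hPc1 : Continuous (fun θ => Pp r θ) :=
    hPq.comp (continuous_id.prodMk continuous_const)
  have stepi : r * u (Pp r θ₀) ^ 2 ≤
      (2 * π)⁻¹ * (∫ θ in (-π)..π, r * u (Pp r θ) ^ 2)
        + ∫ θ in (-π)..π, |r * (2 * u (Pp r θ) * Om2 u (Pp r θ))| := by
    refine circle_bound (f := fun θ => r * u (Pp r θ) ^ 2)
      (f' := fun θ => r * (2 * u (Pp r θ) * Om2 u (Pp r θ)))
      (fun θ => ?_) ?_ hθ₀mem
    · have h := ((hasDerivAt_angular hu r θ).pow 2).const_mul r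
      refine h.congr_deriv ?_
      push_cast
      ring
    · refine continuous_const.mul ?_
      exact (continuous_const.mul (hu.continuous.comp hPc1)).mul
        ((cont_Om2 hu).comp hPc1)
  -- step (iv): integrate pointwise bounds over θ
  have stepivψ : (∫ θ in (-π)..π, r * u (Pp r θ) ^ 2)
      ≤ ∫ θ in (-π)..π, ∫ s in r..M, |Aψ θ s| := by
    apply intervalIntegral.integral_mono_on (by linarith [Real.pi_pos])
    · exact (continuous_const.mul ((hu.continuous.comp hPc1).pow 2)).intervalIntegrable _ _
    · exact hparamψ.intervalIntegrable _ _
    · intro θ _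
      rw [← hinnψ θ]
      exact stepii θ
  have stepivφ : (∫ θ in (-π)..π, |r * (2 * u (Pp r θ) * Om2 u (Pp r θ))|)
      ≤ ∫ θ in (-π)..π, ∫ s in r..M, |Aφ θ s| := by
    apply intervalIntegral.integral_mono_on (by linarith [Real.pi_pos])
    · refine Continuous.intervalIntegrable ?_ _ _
      exact (continuous_const.mul ((continuous_const.mul (hu.continuous.comp hPc1)).mul
        ((cont_Om2 hu).comp hPc1))).abs
    · exact hparamφ.intervalIntegrable _ _
    · intro θ _
      rw [← hinnφ θ]
      exact stepiii θ
  -- step (vi): pointwise domination by the polar-Cartesian majorant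
  set K : ℝ × ℝ → ℝ := fun p => p.1 * Cw (toE2 (p.1 * Real.cos p.2, p.1 * Real.sin p.2))
    with hKdef
  have hKc : Continuous K := by
    simp only [hKdef]
    refine continuous_fst.mul (hCwc.comp (continuous_toE2.comp ?_))
    exact (continuous_fst.mul (Real.continuous_cos.comp continuous_snd)).prodMk
      (continuous_fst.mul (Real.continuous_sin.comp continuous_snd))
  have hKPp : ∀ s θ : ℝ, K (s, θ) = s * Cw (Pp s θ) := by
    intro s θ
    simp [hKdef, Pp]
  have hKnn : ∀ s θ : ℝ, 0 ≤ s → 0 ≤ K (s, θ) := by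
    intro s θ hs0
    rw [hKPp]
    exact mul_nonneg hs0 (hCwnn _)
  have hdom : ∀ θ s : ℝ, 1 ≤ s → (2 * π)⁻¹ * |Aψ θ s| + |Aφ θ s| ≤ K (s, θ) := by
    intro θ s hs1
    have hs0 : (0:ℝ) ≤ s := le_trans zero_le_one hs1
    set y := Pp s θ with hydef
    have htrig1 := abs_trig_comb θ (pd2 0 u y) (pd2 1 u y)
    have htrig2 := abs_trig_comb θ (pd2 0 (Om2 u) y) (pd2 1 (Om2 u) y)
    have hψb : |Aψ θ s| ≤ s * (u y ^ 2 + 2 * |u y| * (|pd2 0 u y| + |pd2 1 u y|)) := by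
      simp only [hAψdef, ← hydef]
      calc |u y ^ 2 + s * (2 * u y * (Real.cos θ * pd2 0 u y + Real.sin θ * pd2 1 u y))|
          ≤ |u y ^ 2| + |s * (2 * u y * (Real.cos θ * pd2 0 u y + Real.sin θ * pd2 1 u y))| :=
            abs_add_le _ _
        _ = u y ^ 2 + s * (2 * |u y|
              * |Real.cos θ * pd2 0 u y + Real.sin θ * pd2 1 u y|) := by
            rw [abs_of_nonneg (sq_nonneg _), abs_mul, abs_of_nonneg hs0, abs_mul, abs_mul]
            norm_num
        _ ≤ s * (u y ^ 2 + 2 * |u y| * (|pd2 0 u y| + |pd2 1 u y|)) := by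
            have h1 : u y ^ 2 ≤ s * u y ^ 2 := le_mul_of_one_le_left (sq_nonneg _) hs1
            have h2 : 2 * |u y| * |Real.cos θ * pd2 0 u y + Real.sin θ * pd2 1 u y|
                ≤ 2 * |u y| * (|pd2 0 u y| + |pd2 1 u y|) := by
              apply mul_le_mul_of_nonneg_left htrig1
              positivity
            nlinarith [abs_nonneg (u y), mul_le_mul_of_nonneg_left h2 hs0]
    have hφb : |Aφ θ s| ≤ s * (2 * |u y| * |Om2 u y|
        + 2 * (|pd2 0 u y| + |pd2 1 u y|) * |Om2 u y|
        + 2 * |u y| * (|pd2 0 (Om2 u) y| + |pd2 1 (Om2 u) y|)) := by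
      simp only [hAφdef, ← hydef]
      have e1 : |2 * (u y * Om2 u y)| = 2 * (|u y| * |Om2 u y|) := by
        rw [abs_mul, abs_mul]
        norm_num
      have e2 : |(2 * s) * ((Real.cos θ * pd2 0 u y + Real.sin θ * pd2 1 u y) * Om2 u y
          + u y * (Real.cos θ * pd2 0 (Om2 u) y + Real.sin θ * pd2 1 (Om2 u) y))|
          ≤ (2 * s) * ((|pd2 0 u y| + |pd2 1 u y|) * |Om2 u y|
            + |u y| * (|pd2 0 (Om2 u) y| + |pd2 1 (Om2 u) y|)) := by
        rw [abs_mul, abs_of_nonneg (by linarith : (0:ℝ) ≤ 2 * s)]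
        apply mul_le_mul_of_nonneg_left _ (by linarith : (0:ℝ) ≤ 2 * s)
        calc |(Real.cos θ * pd2 0 u y + Real.sin θ * pd2 1 u y) * Om2 u y
            + u y * (Real.cos θ * pd2 0 (Om2 u) y + Real.sin θ * pd2 1 (Om2 u) y)|
            ≤ |(Real.cos θ * pd2 0 u y + Real.sin θ * pd2 1 u y) * Om2 u y|
              + |u y * (Real.cos θ * pd2 0 (Om2 u) y + Real.sin θ * pd2 1 (Om2 u) y)| :=
              abs_add_le _ _
          _ = |Real.cos θ * pd2 0 u y + Real.sin θ * pd2 1 u y| * |Om2 u y|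
              + |u y| * |Real.cos θ * pd2 0 (Om2 u) y + Real.sin θ * pd2 1 (Om2 u) y| := by
              rw [abs_mul, abs_mul]
          _ ≤ _ := by
              have := abs_nonneg (Om2 u y)
              have := abs_nonneg (u y)
              nlinarith [mul_le_mul_of_nonneg_right htrig1 (abs_nonneg (Om2 u y)),
                mul_le_mul_of_nonneg_left htrig2 (abs_nonneg (u y))]
      calc |2 * (u y * Om2 u y) + (2 * s) * ((Real.cos θ * pd2 0 u y
            + Real.sin θ * pd2 1 u y) * Om2 u y
            + u y * (Real.cos θ * pd2 0 (Om2 u) y + Real.sin θ * pd2 1 (Om2 u) y))|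
          ≤ |2 * (u y * Om2 u y)| + |(2 * s) * ((Real.cos θ * pd2 0 u y
            + Real.sin θ * pd2 1 u y) * Om2 u y
            + u y * (Real.cos θ * pd2 0 (Om2 u) y + Real.sin θ * pd2 1 (Om2 u) y))| :=
            abs_add_le _ _
        _ ≤ 2 * (|u y| * |Om2 u y|) + (2 * s) * ((|pd2 0 u y| + |pd2 1 u y|) * |Om2 u y|
            + |u y| * (|pd2 0 (Om2 u) y| + |pd2 1 (Om2 u) y|)) := by
            rw [e1]
            exact add_le_add_right e2 _
        _ ≤ _ := by
            have h2u : 2 * (|u y| * |Om2 u y|) ≤ s * (2 * |u y| * |Om2 u y|) := by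
              nlinarith [mul_nonneg (abs_nonneg (u y)) (abs_nonneg (Om2 u y))]
            nlinarith []
    have hpiinv : (2 * π)⁻¹ ≤ 1 := by
      rw [inv_le_one_iff₀]
      right
      linarith [Real.pi_gt_three]
    have hpiinv0 : (0:ℝ) ≤ (2 * π)⁻¹ := by positivity
    rw [hKPp]
    have hAψnn := abs_nonneg (Aψ θ s)
    calc (2 * π)⁻¹ * |Aψ θ s| + |Aφ θ s| ≤ 1 * |Aψ θ s| + |Aφ θ s| := by
          nlinarith
      _ = |Aψ θ s| + |Aφ θ s| := by ring
      _ ≤ s * (u y ^ 2 + 2 * |u y| * (|pd2 0 u y| + |pd2 1 u y|))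
          + s * (2 * |u y| * |Om2 u y|
            + 2 * (|pd2 0 u y| + |pd2 1 u y|) * |Om2 u y|
            + 2 * |u y| * (|pd2 0 (Om2 u) y| + |pd2 1 (Om2 u) y|)) := add_le_add hψb hφb
      _ = s * Cw y := by
          simp only [hCwdef]
          ring
  -- combine circle bound with radial bounds
  have hr1le : ∀ sθ : ℝ, sθ ∈ Icc r M → 1 ≤ sθ := fun sθ hsθ => le_trans hx hsθ.1
  have hKcθ : ∀ θ : ℝ, Continuous (fun s => K (s, θ)) :=
    fun θ => hKc.comp (continuous_id.prodMk continuous_const)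
  have hinner_le : ∀ θ : ℝ,
      (2 * π)⁻¹ * (∫ s in r..M, |Aψ θ s|) + (∫ s in r..M, |Aφ θ s|)
        ≤ ∫ s in r..M, K (s, θ) := by
    intro θ
    have hiψ : IntervalIntegrable (fun s => |Aψ θ s|) volume r M :=
      ((hAψc.comp (continuous_const.prodMk continuous_id)).abs).intervalIntegrable _ _
    have hiφ : IntervalIntegrable (fun s => |Aφ θ s|) volume r M :=
      ((hAφc.comp (continuous_const.prodMk continuous_id)).abs).intervalIntegrable _ _
    have hsum : (2 * π)⁻¹ * (∫ s in r..M, |Aψ θ s|) + (∫ s in r..M, |Aφ θ s|)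
        = ∫ s in r..M, ((2 * π)⁻¹ * |Aψ θ s| + |Aφ θ s|) := by
      rw [← intervalIntegral.integral_const_mul]
      exact (intervalIntegral.integral_add (hiψ.const_mul _) hiφ).symm
    rw [hsum]
    apply intervalIntegral.integral_mono_on hrM
    · exact (hiψ.const_mul _).add hiφ
    · exact (hKcθ θ).intervalIntegrable _ _
    · intro sθ hsθ
      exact hdom θ sθ (hr1le sθ hsθ)
  have houter : (2 * π)⁻¹ * (∫ θ in (-π)..π, ∫ s in r..M, |Aψ θ s|)
      + (∫ θ in (-π)..π, ∫ s in r..M, |Aφ θ s|)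
        ≤ ∫ θ in (-π)..π, ∫ s in r..M, K (s, θ) := by
    have hiψ : IntervalIntegrable (fun θ => ∫ s in r..M, |Aψ θ s|) volume (-π) π :=
      hparamψ.intervalIntegrable _ _
    have hiφ : IntervalIntegrable (fun θ => ∫ s in r..M, |Aφ θ s|) volume (-π) π :=
      hparamφ.intervalIntegrable _ _
    have hKparam : Continuous (fun θ => ∫ s in r..M, K (s, θ)) := by
      apply intervalIntegral.continuous_parametric_intervalIntegral_of_continuous'
      exact hKc.comp (continuous_snd.prodMk continuous_fst)
    have hsum : (2 * π)⁻¹ * (∫ θ in (-π)..π, ∫ s in r..M, |Aψ θ s|)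
        + (∫ θ in (-π)..π, ∫ s in r..M, |Aφ θ s|)
        = ∫ θ in (-π)..π,
            ((2 * π)⁻¹ * (∫ s in r..M, |Aψ θ s|) + (∫ s in r..M, |Aφ θ s|)) := by
      rw [← intervalIntegral.integral_const_mul]
      exact (intervalIntegral.integral_add (hiψ.const_mul _) hiφ).symm
    rw [hsum]
    apply intervalIntegral.integral_mono_on (by linarith [Real.pi_pos])
    · exact (hiψ.const_mul _).add hiφ
    · exact hKparam.intervalIntegrable _ _
    · intro θ _
      exact hinner_le θ
  have hpiinv0 : (0:ℝ) ≤ (2 * π)⁻¹ := by positivity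
  have main1 : r * u x ^ 2 ≤ ∫ θ in (-π)..π, ∫ s in r..M, K (s, θ) := by
    rw [← hPx]
    calc r * u (Pp r θ₀) ^ 2
        ≤ (2 * π)⁻¹ * (∫ θ in (-π)..π, r * u (Pp r θ) ^ 2)
          + ∫ θ in (-π)..π, |r * (2 * u (Pp r θ) * Om2 u (Pp r θ))| := stepi
      _ ≤ (2 * π)⁻¹ * (∫ θ in (-π)..π, ∫ s in r..M, |Aψ θ s|)
          + (∫ θ in (-π)..π, ∫ s in r..M, |Aφ θ s|) := by
          have := mul_le_mul_of_nonneg_left stepivψ hpiinv0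
          linarith [stepivφ]
      _ ≤ _ := houter
  -- convert to a product set integral
  have hKS_prodint : IntegrableOn (fun q : ℝ × ℝ => K (q.2, q.1)) (Ioc (-π) π ×ˢ Ioc r M)
      volume := by
    have hcont : Continuous (fun q : ℝ × ℝ => K (q.2, q.1)) :=
      hKc.comp (continuous_snd.prodMk continuous_fst)
    exact (hcont.continuousOn.integrableOn_compact
      (isCompact_Icc.prod isCompact_Icc)).mono_set
      (prod_mono Ioc_subset_Icc_self Ioc_subset_Icc_self)
  have hprod1 : (∫ θ in (-π)..π, ∫ s in r..M, K (s, θ))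
      = ∫ q in Ioc (-π) π ×ˢ Ioc r M, K (q.2, q.1) := by
    rw [intervalIntegral.integral_of_le (by linarith [Real.pi_pos] : -π ≤ π)]
    have : ∀ θ : ℝ, (∫ s in r..M, K (s, θ)) = ∫ s in Ioc r M, K (s, θ) := by
      intro θ
      rw [intervalIntegral.integral_of_le hrM]
    simp only [this]
    rw [Measure.volume_eq_prod] at hKS_prodint ⊢
    exact (setIntegral_prod _ hKS_prodint).symm
  have hswap : (∫ q in Ioc (-π) π ×ˢ Ioc r M, K (q.2, q.1))
      = ∫ p in Ioc r M ×ˢ Ioc (-π) π, K p := by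
    have h1 : ∀ q : ℝ × ℝ, K (q.2, q.1) = K q.swap := fun q => rfl
    simp only [h1]
    rw [Measure.volume_eq_prod, ← Measure.prod_restrict, ← Measure.prod_restrict]
    exact integral_prod_swap K
  -- replace the closed θ-interval by the open one (a.e. equality)
  have hae : (Ioc r M ×ˢ Ioc (-π) π : Set (ℝ × ℝ)) =ᵐ[volume]
      (Ioc r M ×ˢ Ioo (-π) π : Set (ℝ × ℝ)) := by
    rw [MeasureTheory.ae_eq_set]
    constructor
    · have h0 : volume (univ ×ˢ {π} : Set (ℝ × ℝ)) = 0 := by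
        rw [Measure.volume_eq_prod, Measure.prod_prod]
        simp
      refine measure_mono_null ?_ h0
      rintro ⟨p1, p2⟩ ⟨⟨h1, h2⟩, hn⟩
      simp only [mem_prod, mem_univ, mem_singleton_iff, true_and]
      by_contra hne
      exact hn ⟨h1, h2.1, lt_of_le_of_ne h2.2 hne⟩
    · have hsub : (Ioc r M ×ˢ Ioo (-π) π : Set (ℝ × ℝ)) ⊆ Ioc r M ×ˢ Ioc (-π) π :=
        prod_mono subset_rfl Ioo_subset_Ioc_self
      rw [diff_eq_empty.2 hsub]
      simp
  have haeq : (∫ p in Ioc r M ×ˢ Ioc (-π) π, K p)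
      = ∫ p in Ioc r M ×ˢ Ioo (-π) π, K p :=
    setIntegral_congr_set hae
  -- compare with the polar target
  have htargetmeas : MeasurableSet polarCoord.target := polarCoord.open_target.measurableSet
  have hKtarget : IntegrableOn K polarCoord.target volume := by
    apply integrableOn_of_support_subset_compact hKc htargetmeas
      (Q := Icc (-R) R ×ˢ Icc (-π) π) (isCompact_Icc.prod isCompact_Icc)
    rintro p ⟨hpT, hpS⟩
    rw [polarCoord_target] at hpT
    refine ⟨?_, ⟨hpT.2.1.le, hpT.2.2.le⟩⟩
    have hK0 : K p ≠ 0 := hpS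
    have hCwne : Cw (Pp p.1 p.2) ≠ 0 := by
      intro h0
      apply hK0
      have : K p = K (p.1, p.2) := rfl
      rw [this, hKPp, h0, mul_zero]
    have hmem : Pp p.1 p.2 ∈ tsupport u := by
      by_contra hmem
      exact hCwne (hCwvan _ hmem)
    have : ¬ (R ≤ ‖Pp p.1 p.2‖) := fun hge => (hR _ hge) hmem
    rw [norm_Pp] at this
    push_neg at this
    exact abs_le.1 this.le
  have hKnn_ae : 0 ≤ᵐ[volume.restrict polarCoord.target] K := by
    refine ae_restrict_of_forall_mem htargetmeas ?_
    intro p hp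
    rw [polarCoord_target] at hp
    exact hKnn p.1 p.2 hp.1.le
  have hsubtarget : (Ioc r M ×ˢ Ioo (-π) π : Set (ℝ × ℝ)) ⊆ polarCoord.target := by
    rw [polarCoord_target]
    exact prod_mono (fun s hsx => lt_of_lt_of_le (lt_of_lt_of_le zero_lt_one hx) hsx.1.le)
      subset_rfl
  have hmono : (∫ p in Ioc r M ×ˢ Ioo (-π) π, K p) ≤ ∫ p in polarCoord.target, K p :=
    setIntegral_mono_set hKtarget hKnn_ae hsubtarget.eventuallyLE
  -- polar change of variables
  have hpolar : (∫ p in polarCoord.target, K p) = ∫ p : ℝ × ℝ, Cw (toE2 p) := by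
    rw [← integral_comp_polarCoord_symm (fun p : ℝ × ℝ => Cw (toE2 p))]
    apply setIntegral_congr_fun htargetmeas
    intro p _
    rw [show K p = K (p.1, p.2) from rfl, hKPp]
    simp only [polarCoord_symm_apply, smul_eq_mul, Pp]
  have hfinal : (∫ p : ℝ × ℝ, Cw (toE2 p)) = ∫ y : E2, Cw y :=
    measurePreserving_toE2.integral_comp toE2.measurableEmbedding (fun y => Cw y)
  calc ‖x‖ * u x ^ 2 ≤ ∫ θ in (-π)..π, ∫ s in r..M, K (s, θ) := main1
    _ = ∫ q in Ioc (-π) π ×ˢ Ioc r M, K (q.2, q.1) := hprod1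
    _ = ∫ p in Ioc r M ×ˢ Ioc (-π) π, K p := hswap
    _ = ∫ p in Ioc r M ×ˢ Ioo (-π) π, K p := haeq
    _ ≤ ∫ p in polarCoord.target, K p := hmono
    _ = ∫ p : ℝ × ℝ, Cw (toE2 p) := hpolar
    _ = ∫ y : E2, Cw y := hfinal

end PolarBound


section Final

lemma hcs_absmul {f g : E2 → ℝ} (hfs : HasCompactSupport f) :
    HasCompactSupport (fun y : E2 => |f y| * |g y|) := by
  apply HasCompactSupport.intro hfs
  intro y hy
  simp [image_eq_zero_of_notMem_tsupport hy]

lemma integrable_absmul {f g : E2 → ℝ} (hf : Continuous f) (hfs : HasCompactSupport f)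
    (hg : Continuous g) :
    Integrable (fun y : E2 => |f y| * |g y|) :=
  (hf.abs.mul hg.abs).integrable_of_hasCompactSupport (hcs_absmul hfs)

lemma int_absmul_le {f g : E2 → ℝ} (hf : Continuous f) (hfs : HasCompactSupport f)
    (hg : Continuous g) (hgs : HasCompactSupport g) :
    ∫ y : E2, |f y| * |g y| ≤ L2norm f * L2norm g := by
  have he : (fun y : E2 => |f y| * |g y|) = fun y => |f y * g y| :=
    funext fun y => (abs_mul _ _).symm
  rw [he]
  exact l2_CS hf hfs hg hgs

end Final

end KSaux

set_option maxHeartbeats 2000000 in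
set_option maxRecDepth 8000 in
/-- Two-dimensional weighted Klainerman–Sobolev estimate: `⟨|x|⟩^{1/2}|u(x)| ≤
C ∑_{|a|≤2} ‖D^a u‖_{L²}`, the sum taken over compositions of `∂_1, ∂_2, Ω`
of length at most 2. -/
theorem weighted_klainerman_sobolev :
    ∃ C > (0 : ℝ), ∀ u : EuclideanSpace ℝ (Fin 2) → ℝ,
      ContDiff ℝ (⊤ : ℕ∞) u → HasCompactSupport u →
      ∀ x : EuclideanSpace ℝ (Fin 2),
        (Real.sqrt (1 + ‖x‖ ^ 2)) ^ ((1 : ℝ) / 2) * |u x| ≤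
          C * (L2norm u + ∑ i : Fin 3, L2norm (Dfield i u)
            + ∑ i : Fin 3, ∑ j : Fin 3, L2norm (Dfield i (Dfield j u))) := by
  refine ⟨100, by norm_num, ?_⟩
  intro u hu hs x
  set S := L2norm u + ∑ i : Fin 3, L2norm (Dfield i u)
    + ∑ i : Fin 3, ∑ j : Fin 3, L2norm (Dfield i (Dfield j u)) with hSdef
  -- basic continuity and support facts
  have hcu : Continuous u := hu.continuous
  have hcp0 : Continuous (pd2 0 u) := cont_pd2 hu 0
  have hcp1 : Continuous (pd2 1 u) := cont_pd2 hu 1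
  have hcO : Continuous (Om2 u) := cont_Om2 hu
  have hcd0 : Continuous (pd2 0 (Om2 u)) := cont_pd2 (contDiff_Om2 hu) 0
  have hcd1 : Continuous (pd2 1 (Om2 u)) := cont_pd2 (contDiff_Om2 hu) 1
  have hce : Continuous (pd2 1 (pd2 0 u)) := cont_pd2 (contDiff_pd2 hu 0) 1
  have hsp0 : HasCompactSupport (pd2 0 u) := hcs_pd2 hs 0
  have hsp1 : HasCompactSupport (pd2 1 u) := hcs_pd2 hs 1
  have hsO : HasCompactSupport (Om2 u) := hcs_Om2 hs
  have hsd0 : HasCompactSupport (pd2 0 (Om2 u)) := hcs_pd2 hsO 0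
  have hsd1 : HasCompactSupport (pd2 1 (Om2 u)) := hcs_pd2 hsO 1
  have hse : HasCompactSupport (pd2 1 (pd2 0 u)) := hcs_pd2 hsp0 1
  -- the norms appearing in `S`
  have hsum1 : ∑ i : Fin 3, L2norm (Dfield i u)
      = L2norm (pd2 0 u) + L2norm (pd2 1 u) + L2norm (Om2 u) := by
    simp [Dfield, Fin.sum_univ_three]
  have hsum2 : ∑ i : Fin 3, ∑ j : Fin 3, L2norm (Dfield i (Dfield j u)) =
      L2norm (pd2 0 (pd2 0 u)) + L2norm (pd2 0 (pd2 1 u)) + L2norm (pd2 0 (Om2 u))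
      + (L2norm (pd2 1 (pd2 0 u)) + L2norm (pd2 1 (pd2 1 u)) + L2norm (pd2 1 (Om2 u)))
      + (L2norm (Om2 (pd2 0 u)) + L2norm (Om2 (pd2 1 u)) + L2norm (Om2 (Om2 u))) := by
    simp [Dfield, Fin.sum_univ_three]
  have hn1 := L2norm_nonneg u
  have hn2 := L2norm_nonneg (pd2 0 u)
  have hn3 := L2norm_nonneg (pd2 1 u)
  have hn4 := L2norm_nonneg (Om2 u)
  have hn5 := L2norm_nonneg (pd2 0 (pd2 0 u))
  have hn6 := L2norm_nonneg (pd2 0 (pd2 1 u))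
  have hn7 := L2norm_nonneg (pd2 0 (Om2 u))
  have hn8 := L2norm_nonneg (pd2 1 (pd2 0 u))
  have hn9 := L2norm_nonneg (pd2 1 (pd2 1 u))
  have hn10 := L2norm_nonneg (pd2 1 (Om2 u))
  have hn11 := L2norm_nonneg (Om2 (pd2 0 u))
  have hn12 := L2norm_nonneg (Om2 (pd2 1 u))
  have hn13 := L2norm_nonneg (Om2 (Om2 u))
  have hSnn : 0 ≤ S := by rw [hSdef, hsum1, hsum2]; linarith
  have hbu : L2norm u ≤ S := by rw [hSdef, hsum1, hsum2]; linarith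
  have hb0 : L2norm (pd2 0 u) ≤ S := by rw [hSdef, hsum1, hsum2]; linarith
  have hb1 : L2norm (pd2 1 u) ≤ S := by rw [hSdef, hsum1, hsum2]; linarith
  have hbO : L2norm (Om2 u) ≤ S := by rw [hSdef, hsum1, hsum2]; linarith
  have hbd0 : L2norm (pd2 0 (Om2 u)) ≤ S := by rw [hSdef, hsum1, hsum2]; linarith
  have hbd1 : L2norm (pd2 1 (Om2 u)) ≤ S := by rw [hSdef, hsum1, hsum2]; linarith
  have hbe : L2norm (pd2 1 (pd2 0 u)) ≤ S := by rw [hSdef, hsum1, hsum2]; linarith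
  -- product bounds
  have hprod : ∀ {f g : EuclideanSpace ℝ (Fin 2) → ℝ}, Continuous f → HasCompactSupport f →
      Continuous g → HasCompactSupport g → L2norm f ≤ S → L2norm g ≤ S →
      ∫ y : EuclideanSpace ℝ (Fin 2), |f y| * |g y| ≤ S * S := by
    intro f g hf hfs hg hgs h1 h2
    refine le_trans (int_absmul_le hf hfs hg hgs) ?_
    exact mul_le_mul h1 h2 (L2norm_nonneg g) hSnn
  -- square of u bound (both regimes)
  have hsq : u x ^ 2 ≤ 4 * S ^ 2 := by
    have h := cart_bound hu hs x
    have hsplit : (∫ y : EuclideanSpace ℝ (Fin 2),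
        2 * (|pd2 1 u y| * |pd2 0 u y| + |u y| * |pd2 1 (pd2 0 u) y|))
        = 2 * ((∫ y : EuclideanSpace ℝ (Fin 2), |pd2 1 u y| * |pd2 0 u y|)
          + ∫ y : EuclideanSpace ℝ (Fin 2), |u y| * |pd2 1 (pd2 0 u) y|) := by
      rw [integral_const_mul]
      rw [integral_add (integrable_absmul hcp1 hsp1 hcp0)
        (integrable_absmul hcu hs hce)]
    rw [hsplit] at h
    have h1 := hprod hcp1 hsp1 hcp0 hsp0 hb1 hb0
    have h2 := hprod hcu hs hce hse hbu hbe
    have hSS : S * S = S ^ 2 := (sq S).symm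
    linarith
  -- weight
  set w : ℝ := (Real.sqrt (1 + ‖x‖ ^ 2)) ^ ((1 : ℝ) / 2) with hwdef
  have hwnn : 0 ≤ w := Real.rpow_nonneg (Real.sqrt_nonneg _) _
  have hw2 : w ^ 2 = Real.sqrt (1 + ‖x‖ ^ 2) := by
    rw [hwdef, ← Real.rpow_natCast ((Real.sqrt (1 + ‖x‖ ^ 2)) ^ ((1:ℝ)/2)) 2,
      ← Real.rpow_mul (Real.sqrt_nonneg _)]
    norm_num
  have hkey : w ^ 2 * u x ^ 2 ≤ 30 * S ^ 2 := by
    rcases le_or_gt ‖x‖ 1 with hx1 | hx1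
    · -- small x
      have hwle : w ^ 2 ≤ 2 := by
        rw [hw2]
        calc Real.sqrt (1 + ‖x‖ ^ 2) ≤ Real.sqrt 4 := by
              apply Real.sqrt_le_sqrt
              nlinarith [norm_nonneg x]
          _ = 2 := by
              rw [show (4:ℝ) = 2 ^ 2 by norm_num, Real.sqrt_sq (by norm_num : (0:ℝ) ≤ 2)]
      calc w ^ 2 * u x ^ 2 ≤ 2 * u x ^ 2 :=
            mul_le_mul_of_nonneg_right hwle (sq_nonneg _)
        _ ≤ 30 * S ^ 2 := by nlinarith [sq_nonneg S]
    · -- large x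
      have hwle : w ^ 2 ≤ 2 * ‖x‖ := by
        rw [hw2]
        calc Real.sqrt (1 + ‖x‖ ^ 2) ≤ Real.sqrt (4 * ‖x‖ ^ 2) := by
              apply Real.sqrt_le_sqrt
              nlinarith
          _ = 2 * ‖x‖ := by
              rw [show (4:ℝ) * ‖x‖ ^ 2 = (2 * ‖x‖) ^ 2 by ring,
                Real.sqrt_sq (by positivity)]
      -- the polar bound
      have hpb := polar_bound hu hs x hx1.le
      have hsplit : (∫ y : EuclideanSpace ℝ (Fin 2),
          (u y ^ 2 + 2 * |u y| * (|pd2 0 u y| + |pd2 1 u y|)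
            + (2 * |u y| * |Om2 u y| + 2 * (|pd2 0 u y| + |pd2 1 u y|) * |Om2 u y|
              + 2 * |u y| * (|pd2 0 (Om2 u) y| + |pd2 1 (Om2 u) y|))))
          = (∫ y : EuclideanSpace ℝ (Fin 2), u y ^ 2)
            + 2 * ((∫ y : EuclideanSpace ℝ (Fin 2), |u y| * |pd2 0 u y|)
              + (∫ y : EuclideanSpace ℝ (Fin 2), |u y| * |pd2 1 u y|))
            + (2 * (∫ y : EuclideanSpace ℝ (Fin 2), |u y| * |Om2 u y|)
              + 2 * ((∫ y : EuclideanSpace ℝ (Fin 2), |pd2 0 u y| * |Om2 u y|)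
                + (∫ y : EuclideanSpace ℝ (Fin 2), |pd2 1 u y| * |Om2 u y|))
              + 2 * ((∫ y : EuclideanSpace ℝ (Fin 2), |u y| * |pd2 0 (Om2 u) y|)
                + (∫ y : EuclideanSpace ℝ (Fin 2), |u y| * |pd2 1 (Om2 u) y|))) := by
        have e1 : ∀ y : EuclideanSpace ℝ (Fin 2),
            (u y ^ 2 + 2 * |u y| * (|pd2 0 u y| + |pd2 1 u y|)
            + (2 * |u y| * |Om2 u y| + 2 * (|pd2 0 u y| + |pd2 1 u y|) * |Om2 u y|
              + 2 * |u y| * (|pd2 0 (Om2 u) y| + |pd2 1 (Om2 u) y|)))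
            = u y ^ 2 + (2 * (|u y| * |pd2 0 u y| + |u y| * |pd2 1 u y|)
              + (2 * (|u y| * |Om2 u y|)
                + (2 * (|pd2 0 u y| * |Om2 u y| + |pd2 1 u y| * |Om2 u y|)
                  + 2 * (|u y| * |pd2 0 (Om2 u) y| + |u y| * |pd2 1 (Om2 u) y|)))) := by
          intro y; ring
        simp only [e1]
        have iu2 : Integrable (fun y : EuclideanSpace ℝ (Fin 2) => u y ^ 2) :=
          (hcu.pow 2).integrable_of_hasCompactSupport
            (HasCompactSupport.intro hs (fun y hy => by
              simp [image_eq_zero_of_notMem_tsupport hy]))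
        have i1 := integrable_absmul hcu hs hcp0
        have i2 := integrable_absmul hcu hs hcp1
        have i3 := integrable_absmul hcu hs hcO
        have i4 := integrable_absmul hcp0 hsp0 hcO
        have i5 := integrable_absmul hcp1 hsp1 hcO
        have i6 := integrable_absmul hcu hs hcd0
        have i7 := integrable_absmul hcu hs hcd1
        have IT1 : Integrable (fun y : EuclideanSpace ℝ (Fin 2) =>
            2 * (|u y| * |pd2 0 u y| + |u y| * |pd2 1 u y|)) := by
          exact (i1.add i2).const_mul 2
        have IT2 : Integrable (fun y : EuclideanSpace ℝ (Fin 2) =>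
            2 * (|u y| * |Om2 u y|)) := by exact i3.const_mul 2
        have IT3 : Integrable (fun y : EuclideanSpace ℝ (Fin 2) =>
            2 * (|pd2 0 u y| * |Om2 u y| + |pd2 1 u y| * |Om2 u y|)) := by
          exact (i4.add i5).const_mul 2
        have IT4 : Integrable (fun y : EuclideanSpace ℝ (Fin 2) =>
            2 * (|u y| * |pd2 0 (Om2 u) y| + |u y| * |pd2 1 (Om2 u) y|)) := by
          exact (i6.add i7).const_mul 2
        have IT34 : Integrable (fun y : EuclideanSpace ℝ (Fin 2) =>
            2 * (|pd2 0 u y| * |Om2 u y| + |pd2 1 u y| * |Om2 u y|)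
            + 2 * (|u y| * |pd2 0 (Om2 u) y| + |u y| * |pd2 1 (Om2 u) y|)) := by
          exact IT3.add IT4
        have IT234 : Integrable (fun y : EuclideanSpace ℝ (Fin 2) =>
            2 * (|u y| * |Om2 u y|)
            + (2 * (|pd2 0 u y| * |Om2 u y| + |pd2 1 u y| * |Om2 u y|)
              + 2 * (|u y| * |pd2 0 (Om2 u) y| + |u y| * |pd2 1 (Om2 u) y|))) := by
          exact IT2.add IT34
        rw [integral_add iu2 (by exact IT1.add IT234), integral_add IT1 IT234,
          integral_add IT2 IT34, integral_add IT3 IT4,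
          integral_const_mul, integral_const_mul, integral_const_mul, integral_const_mul,
          integral_add i1 i2, integral_add i4 i5, integral_add i6 i7]
        ring
      rw [hsplit] at hpb
      have e0 : (∫ y : EuclideanSpace ℝ (Fin 2), u y ^ 2) = L2norm u ^ 2 :=
        integral_sq_eq hcu hs
      rw [e0] at hpb
      have p1 := hprod hcu hs hcp0 hsp0 hbu hb0
      have p2 := hprod hcu hs hcp1 hsp1 hbu hb1
      have p3 := hprod hcu hs hcO hsO hbu hbO
      have p4 := hprod hcp0 hsp0 hcO hsO hb0 hbO
      have p5 := hprod hcp1 hsp1 hcO hsO hb1 hbO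
      have p6 := hprod hcu hs hcd0 hsd0 hbu hbd0
      have p7 := hprod hcu hs hcd1 hsd1 hbu hbd1
      have hSS : S * S = S ^ 2 := (sq S).symm
      have hu2S : L2norm u ^ 2 ≤ S ^ 2 := pow_le_pow_left₀ hn1 hbu 2
      have hrb : ‖x‖ * u x ^ 2 ≤ 15 * S ^ 2 := by
        linarith [hpb, p1, p2, p3, p4, p5, p6, p7, hu2S, hSS]
      calc w ^ 2 * u x ^ 2 ≤ (2 * ‖x‖) * u x ^ 2 :=
            mul_le_mul_of_nonneg_right hwle (sq_nonneg _)
        _ = 2 * (‖x‖ * u x ^ 2) := by ring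
        _ ≤ 30 * S ^ 2 := by linarith
  -- conclude
  have hfin : w * |u x| ≤ 100 * S := by
    have hlhs : (w * |u x|) ^ 2 ≤ 30 * S ^ 2 := by
      rw [mul_pow, sq_abs]
      exact hkey
    nlinarith [mul_nonneg hwnn (abs_nonneg (u x)), sq_nonneg (w * |u x| - 100 * S),
      sq_nonneg (w * |u x| + 100 * S)]
  calc (Real.sqrt (1 + ‖x‖ ^ 2)) ^ ((1 : ℝ) / 2) * |u x| = w * |u x| := by rw [hwdef]
    _ ≤ 100 * S := hfin
    _ = 100 * (L2norm u + ∑ i : Fin 3, L2norm (Dfield i u)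
        + ∑ i : Fin 3, ∑ j : Fin 3, L2norm (Dfield i (Dfield j u))) := by rw [hSdef]
end

section
/- (Gronwall with dyadic decomposition / logarithmic forcing.) Let E : [0,T) → [0,∞) be continuous, A, B ≥ 0 constants, and h : [0,T) → [0,∞) a measurable function such that for every T' < T, ∫_0^{T'} h(τ)² dτ ≤ B² (log(2+T'))². Suppose that for all t ∈ [0,T), E(t) ≤ E(0) + ∫_0^t ( A⟨τ⟩^{-5/4} + ⟨τ⟩^{-1} h(τ) ) E(τ) dτ. Then there is an absolute constant C such that E(t) ≤ E(0) · exp( C(A + B) ) for all t ∈ [0,T). -/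
/-!
On an interval `[x, y]` where the coefficient `f = A⟨τ⟩^{-5/4} + ⟨τ⟩⁻¹ h` has integral
`s ≤ 1/2`, the majorant `G(t) = E(0) + ∫₀ᵗ f E` of `E` satisfies `G(y) ≤ G(x) + s G(y)`, hence
`G(y) ≤ G(x) e^{2s}`; cutting `[0, t]` into such intervals gives `E(t) ≤ E(0) exp (2 ∫₀ᵗ f)`.
It remains to bound `∫₀ᵗ f` uniformly in `t`. The first term is integrable on all of `ℝ`. On the
dyadic block `[2^k - 1, 2^{k+1} - 1]`, Cauchy–Schwarz and the logarithmic bound on `∫ h²` control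
the second term by `B 2^{(1-k)/2} log (2 + 2^{k+1})`, which is summable in `k`.
-/

open Real MeasureTheory Set intervalIntegral

theorem le_mul_exp_two_mul_of_le_add_mul {x y s : ℝ} (hx : 0 ≤ x) (hs₀ : 0 ≤ s) (hs : s ≤ 1 / 2)
    (h : y ≤ x + s * y) : y ≤ x * exp (2 * s) := by
  rcases lt_or_ge y 0 with hy | hy
  · nlinarith [exp_pos (2 * s)]
  · -- `1 ≤ (1 - s) e^{2s}`, since `e^{2s} ≥ 1 + 2s` and `(1 - s)(1 + 2s) = 1 + s(1 - 2s)`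
    have hexp : 1 + 2 * s ≤ exp (2 * s) := by linarith [add_one_le_exp (2 * s)]
    nlinarith [mul_le_mul_of_nonneg_left hexp hx, mul_nonneg hy hs₀,
      mul_nonneg (mul_nonneg hy hs₀) hs₀]

theorem le_mul_exp_of_le_add_sub_mul {F G : ℝ → ℝ} {a b : ℝ} (hab : a ≤ b)
    (hF : ContinuousOn F (Icc a b)) (hF_mono : MonotoneOn F (Icc a b))
    (hG : ∀ x ∈ Icc a b, 0 ≤ G x)
    (hstep : ∀ x ∈ Icc a b, ∀ y ∈ Icc a b, x ≤ y → G y ≤ G x + (F y - F x) * G y) :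
    G b ≤ G a * exp (2 * (F b - F a)) := by
  have ha : a ∈ Icc a b := left_mem_Icc.2 hab
  have hsmall : ∀ x ∈ Icc a b, ∀ y ∈ Icc a b, x ≤ y → F y - F x ≤ 1 / 2 →
      G y ≤ G x * exp (2 * (F y - F x)) := fun x hx y hy hxy h =>
    le_mul_exp_two_mul_of_le_add_mul (hG x hx) (sub_nonneg.2 (hF_mono hx hy hxy)) h
      (hstep x hx y hy hxy)
  have hind : ∀ n : ℕ, ∀ y ∈ Icc a b, F y - F a ≤ n / 2 →
      G y ≤ G a * exp (2 * (F y - F a)) := by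
    intro n
    induction n with
    | zero => exact fun y hy h => hsmall a ha y hy hy.1 (by simp at h; linarith)
    | succ n ih =>
      intro y hy h
      by_cases hhalf : F y - F a ≤ 1 / 2
      · exact hsmall a ha y hy hy.1 hhalf
      obtain ⟨c, hc, hFc⟩ : ∃ c ∈ Icc a y, F c = F y - 1 / 2 :=
        intermediate_value_Icc hy.1 (hF.mono (Icc_subset_Icc_right hy.2))
          ⟨by linarith, by linarith⟩
      have hcab : c ∈ Icc a b := ⟨hc.1, hc.2.trans hy.2⟩
      calc G y ≤ G c * exp (2 * (F y - F c)) := hsmall c hcab y hy hc.2 (by linarith)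
        _ ≤ G a * exp (2 * (F c - F a)) * exp (2 * (F y - F c)) := by
          gcongr
          exact ih c hcab (by push_cast at h; linarith)
        _ = G a * exp (2 * (F y - F a)) := by rw [mul_assoc, ← exp_add]; ring_nf
  exact hind ⌈2 * (F b - F a)⌉₊ b (right_mem_Icc.2 hab)
    (by linarith [Nat.le_ceil (2 * (F b - F a))])

section Primitive

variable {g : ℝ → ℝ} {a b x y : ℝ}

theorem integral_sub_integral_of_integrableOn_Icc (hg : IntegrableOn g (Icc a b))
    (hx : x ∈ Icc a b) (hy : y ∈ Icc a b) :
    (∫ τ in a..y, g τ) - ∫ τ in a..x, g τ = ∫ τ in x..y, g τ :=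
  integral_interval_sub_left
    (hg.mono_set (uIcc_subset_Icc (left_mem_Icc.2 (hx.1.trans hx.2)) hy)).intervalIntegrable
    (hg.mono_set (uIcc_subset_Icc (left_mem_Icc.2 (hx.1.trans hx.2)) hx)).intervalIntegrable

theorem monotoneOn_primitive_of_nonneg (hg : IntegrableOn g (Icc a b))
    (hg₀ : ∀ x ∈ Icc a b, 0 ≤ g x) : MonotoneOn (fun x => ∫ τ in a..x, g τ) (Icc a b) := by
  intro x hx y hy hxy
  have hxy' : 0 ≤ ∫ τ in x..y, g τ :=
    integral_nonneg hxy fun τ hτ => hg₀ τ ⟨hx.1.trans hτ.1, hτ.2.trans hy.2⟩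
  linarith [integral_sub_integral_of_integrableOn_Icc hg hx hy]

end Primitive

theorem le_mul_exp_integral_of_le_add_integral {f E : ℝ → ℝ} {a b c : ℝ} (hab : a ≤ b)
    (hf : IntegrableOn f (Icc a b)) (hE : ContinuousOn E (Icc a b))
    (hf₀ : ∀ x ∈ Icc a b, 0 ≤ f x) (hE₀ : ∀ x ∈ Icc a b, 0 ≤ E x)
    (hle : ∀ x ∈ Icc a b, E x ≤ c + ∫ τ in a..x, f τ * E τ) :
    E b ≤ c * exp (2 * ∫ τ in a..b, f τ) := by
  have ha : a ∈ Icc a b := left_mem_Icc.2 hab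
  have hfE : IntegrableOn (fun τ => f τ * E τ) (Icc a b) := hf.mul_continuousOn hE isCompact_Icc
  have hfE₀ : ∀ x ∈ Icc a b, 0 ≤ f x * E x := fun x hx => mul_nonneg (hf₀ x hx) (hE₀ x hx)
  set G : ℝ → ℝ := fun x => c + ∫ τ in a..x, f τ * E τ
  set F : ℝ → ℝ := fun x => ∫ τ in a..x, f τ
  have hG_mono : MonotoneOn G (Icc a b) := fun x hx y hy hxy =>
    add_le_add_right (monotoneOn_primitive_of_nonneg hfE hfE₀ hx hy hxy) c
  have hGa : 0 ≤ G a := (hE₀ a ha).trans (hle a ha)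
  have hstep : ∀ x ∈ Icc a b, ∀ y ∈ Icc a b, x ≤ y → G y ≤ G x + (F y - F x) * G y := by
    intro x hx y hy hxy
    have hsub : Icc x y ⊆ Icc a b := Icc_subset_Icc hx.1 hy.2
    have hbound : (∫ τ in x..y, f τ * E τ) ≤ ∫ τ in x..y, f τ * G y := by
      refine integral_mono_on hxy (hfE.mono_set (uIcc_subset_Icc hx hy)).intervalIntegrable
        ((hf.mono_set (uIcc_subset_Icc hx hy)).intervalIntegrable.mul_const _) fun τ hτ => ?_
      exact mul_le_mul_of_nonneg_left ((hle τ (hsub hτ)).trans (hG_mono (hsub hτ) hy hτ.2))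
        (hf₀ τ (hsub hτ))
    rw [intervalIntegral.integral_mul_const, ← integral_sub_integral_of_integrableOn_Icc hf hx hy,
      ← integral_sub_integral_of_integrableOn_Icc hfE hx hy] at hbound
    simp only [G, F]; linarith
  have hF : ContinuousOn F (Icc a b) := by
    simpa [uIcc_of_le hab] using
      continuousOn_primitive_interval (hf.mono_set (uIcc_subset_Icc ha (right_mem_Icc.2 hab)))
  calc E b ≤ G b := hle b ⟨hab, le_rfl⟩
    _ ≤ G a * exp (2 * (F b - F a)) := le_mul_exp_of_le_add_sub_mul hab hF
        (monotoneOn_primitive_of_nonneg hf hf₀) (fun x hx => hGa.trans (hG_mono ha hx hx.1))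
        hstep
    _ = c * exp (2 * ∫ τ in a..b, f τ) := by simp [G, F]

theorem integral_mul_le_sqrt_mul_sqrt {α : Type*} [MeasurableSpace α] {μ : Measure α}
    {f g : α → ℝ} (hf₀ : 0 ≤ᵐ[μ] f) (hg₀ : 0 ≤ᵐ[μ] g) (hf : MemLp f 2 μ) (hg : MemLp g 2 μ) :
    ∫ a, f a * g a ∂μ ≤ √(∫ a, f a ^ 2 ∂μ) * √(∫ a, g a ^ 2 ∂μ) := by
  simpa [Real.sqrt_eq_rpow] using integral_mul_le_Lp_mul_Lq_of_nonneg
    Real.HolderConjugate.two_two hf₀ hg₀ (by simpa using hf) (by simpa using hg)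

theorem continuous_inv_sqrt_one_add_sq : Continuous fun τ : ℝ => (√(1 + τ ^ 2))⁻¹ :=
  (by fun_prop : Continuous fun τ : ℝ => √(1 + τ ^ 2)).inv₀ fun τ => by positivity

theorem integrable_sqrt_one_add_sq_rpow_neg {r : ℝ} (hr : 1 < r) :
    Integrable fun τ : ℝ => √(1 + τ ^ 2) ^ (-r) := by
  refine (integrable_rpow_neg_one_add_norm_sq (E := ℝ) (μ := volume) (by simpa using hr)).congr
    (ae_of_all _ fun τ => ?_)
  change (1 + ‖τ‖ ^ 2) ^ (-r / 2) = √(1 + τ ^ 2) ^ (-r)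
  rw [Real.norm_eq_abs, sq_abs, sqrt_eq_rpow, ← rpow_mul (by positivity)]
  ring_nf

theorem inv_sqrt_one_add_sq_sq_le {k : ℕ} {τ : ℝ} (hτ : 2 ^ k - 1 ≤ τ) :
    (√(1 + τ ^ 2))⁻¹ ^ 2 ≤ 2 / 4 ^ k := by
  have h2k : (2 : ℝ) ^ k ≤ 1 + τ := by linarith
  have h4k : (4 : ℝ) ^ k = (2 ^ k) ^ 2 := by rw [← pow_mul, mul_comm, pow_mul]; norm_num
  rw [inv_pow, sq_sqrt (by positivity), inv_le_iff_one_le_mul₀ (by positivity), h4k,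
    div_mul_eq_mul_div, one_le_div (by positivity)]
  nlinarith [sq_nonneg (1 - τ), pow_le_pow_left₀ (by positivity) h2k 2]

theorem integrableOn_inv_sqrt_mul {h : ℝ → ℝ} {a b : ℝ}
    (hh : MemLp h 2 (volume.restrict (Icc a b))) :
    IntegrableOn (fun τ => (√(1 + τ ^ 2))⁻¹ * h τ) (Icc a b) :=
  .continuousOn_mul continuous_inv_sqrt_one_add_sq.continuousOn (hh.integrable one_le_two)
    isCompact_Icc

/-- Cauchy–Schwarz bound for the block `[2^k - 1, 2^(k+1) - 1]`, of length `2^k`, on which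
`⟨τ⟩⁻² ≤ 2 / 4^k`. -/
noncomputable def dyadicBlockBound (k : ℕ) : ℝ := √2 * (√2)⁻¹ ^ k * log (2 + 2 ^ (k + 1))

theorem dyadicBlockBound_nonneg (k : ℕ) : 0 ≤ dyadicBlockBound k :=
  mul_nonneg (by positivity) (log_nonneg (by linarith [pow_pos (two_pos : (0 : ℝ) < 2) (k + 1)]))

theorem sq_sqrt_two_mul_inv_sqrt_two_pow (k : ℕ) : (√2 * (√2)⁻¹ ^ k) ^ 2 = 2 / 2 ^ k := by
  rw [mul_pow, ← pow_mul, mul_comm k, pow_mul, inv_pow, sq_sqrt zero_le_two, div_eq_mul_inv,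
    inv_pow]

theorem integral_inv_sqrt_mul_le_dyadicBlockBound {h : ℝ → ℝ} {B x y : ℝ} {k : ℕ} (hB : 0 ≤ B)
    (hx : 2 ^ k - 1 ≤ x) (hxy : x ≤ y) (hy : y ≤ 2 ^ (k + 1) - 1) (hh₀ : ∀ τ, 0 ≤ h τ)
    (hh : MemLp h 2 (volume.restrict (Ioc x y)))
    (hS : ∫ τ in x..y, h τ ^ 2 ≤ B ^ 2 * log (2 + y) ^ 2) :
    ∫ τ in x..y, (√(1 + τ ^ 2))⁻¹ * h τ ≤ B * dyadicBlockBound k := by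
  rw [integral_of_le hxy] at hS ⊢
  have hw : MemLp (fun τ : ℝ => (√(1 + τ ^ 2))⁻¹) 2 (volume.restrict (Ioc x y)) :=
    .of_bound continuous_inv_sqrt_one_add_sq.aestronglyMeasurable 1 <| ae_of_all _ fun τ => by
      rw [norm_inv, Real.norm_of_nonneg (sqrt_nonneg _)]
      exact inv_le_one_of_one_le₀ (one_le_sqrt.2 (by nlinarith))
  have hw2 : ∫ τ in Ioc x y, (√(1 + τ ^ 2))⁻¹ ^ 2 ≤ (√2 * (√2)⁻¹ ^ k) ^ 2 := by
    have hlen : y - x ≤ 2 ^ k := by rw [pow_succ] at hy; linarith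
    calc ∫ τ in Ioc x y, (√(1 + τ ^ 2))⁻¹ ^ 2 ≤ ∫ _ in Ioc x y, 2 / (4 : ℝ) ^ k :=
          setIntegral_mono_on hw.integrable_sq (integrableOn_const (by simp)) measurableSet_Ioc
            fun τ hτ => inv_sqrt_one_add_sq_sq_le (hx.trans hτ.1.le)
      _ = (y - x) * (2 / 4 ^ k) := by simp [hxy]
      _ ≤ 2 ^ k * (2 / 4 ^ k) := by gcongr
      _ = (√2 * (√2)⁻¹ ^ k) ^ 2 := by
          rw [sq_sqrt_two_mul_inv_sqrt_two_pow, show (4 : ℝ) ^ k = 2 ^ k * 2 ^ k by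
            rw [← mul_pow]; norm_num]
          field_simp
  have hy₀ : 1 ≤ 2 + y := by linarith [one_le_pow₀ (M₀ := ℝ) one_le_two (n := k)]
  have hlog : log (2 + y) ≤ log (2 + 2 ^ (k + 1)) := log_le_log (by linarith) (by linarith)
  calc ∫ τ in Ioc x y, (√(1 + τ ^ 2))⁻¹ * h τ
      ≤ √(∫ τ in Ioc x y, (√(1 + τ ^ 2))⁻¹ ^ 2) * √(∫ τ in Ioc x y, h τ ^ 2) :=
        integral_mul_le_sqrt_mul_sqrt (ae_of_all _ fun τ => by positivity) (ae_of_all _ hh₀) hw hh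
    _ ≤ √((√2 * (√2)⁻¹ ^ k) ^ 2) * √((B * log (2 + y)) ^ 2) := by
        gcongr
        rwa [mul_pow]
    _ ≤ (√2 * (√2)⁻¹ ^ k) * (B * log (2 + 2 ^ (k + 1))) := by
        rw [sqrt_sq (by positivity), sqrt_sq (mul_nonneg hB (log_nonneg hy₀))]
        gcongr
    _ = B * dyadicBlockBound k := by unfold dyadicBlockBound; ring

theorem summable_dyadicBlockBound : Summable dyadicBlockBound := by
  have hr : ‖(√2)⁻¹‖ < 1 := by
    rw [norm_inv, Real.norm_of_nonneg (sqrt_nonneg 2)]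
    exact inv_lt_one_of_one_lt₀ (by simp [Real.lt_sqrt])
  have hsum : Summable fun k : ℕ => √2 * log 2 * (((k : ℝ) ^ 1 * (√2)⁻¹ ^ k) + 2 * (√2)⁻¹ ^ k) :=
    ((summable_pow_mul_geometric_of_norm_lt_one 1 hr).add
      ((summable_geometric_of_norm_lt_one hr).mul_left 2)).mul_left _
  refine hsum.of_nonneg_of_le dyadicBlockBound_nonneg fun k => ?_
  have hlog : log (2 + 2 ^ (k + 1)) ≤ (k + 2) * log 2 := by
    have h : (2 : ℝ) + 2 ^ (k + 1) ≤ 2 ^ (k + 2) := by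
      rw [pow_succ, pow_succ, pow_succ]
      nlinarith [one_le_pow₀ (M₀ := ℝ) (a := 2) one_le_two (n := k)]
    calc log (2 + 2 ^ (k + 1)) ≤ log (2 ^ (k + 2)) := log_le_log (by positivity) h
      _ = (k + 2) * log 2 := by rw [Real.log_pow]; push_cast; ring
  calc dyadicBlockBound k ≤ √2 * (√2)⁻¹ ^ k * ((k + 2) * log 2) := by
        unfold dyadicBlockBound; gcongr
    _ = _ := by ring

theorem tsum_dyadicBlockBound_pos : 0 < ∑' k, dyadicBlockBound k :=
  summable_dyadicBlockBound.tsum_pos dyadicBlockBound_nonneg 0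
    (by norm_num [dyadicBlockBound]; exact log_pos (by norm_num))

theorem integral_inv_sqrt_mul_le_tsum {h : ℝ → ℝ} {B t : ℝ} (hB : 0 ≤ B) (ht : 0 ≤ t)
    (hh₀ : ∀ τ, 0 ≤ h τ) (hh : MemLp h 2 (volume.restrict (Icc 0 t)))
    (hS : ∀ s ∈ Icc 0 t, ∫ τ in (0 : ℝ)..s, h τ ^ 2 ≤ B ^ 2 * log (2 + s) ^ 2) :
    ∫ τ in (0 : ℝ)..t, (√(1 + τ ^ 2))⁻¹ * h τ ≤ B * ∑' k, dyadicBlockBound k := by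
  have hwh := integrableOn_inv_sqrt_mul hh
  have hh2 : IntegrableOn (fun τ => h τ ^ 2) (Icc 0 t) := hh.integrable_sq
  have hblocks : ∀ N : ℕ, ∀ y ∈ Icc 0 t, y ≤ 2 ^ N - 1 →
      ∫ τ in (0 : ℝ)..y, (√(1 + τ ^ 2))⁻¹ * h τ ≤ B * ∑ k ∈ Finset.range N, dyadicBlockBound k := by
    intro N
    induction N with
    | zero =>
      intro y hy hyN
      rw [le_antisymm (by simpa using hyN) hy.1]
      simp
    | succ N ih =>
      intro y hy hyN
      have hsum := mul_le_mul_of_nonneg_left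
        (Finset.sum_le_sum_of_subset_of_nonneg (Finset.range_subset_range.2 N.le_succ)
          fun k _ _ => dyadicBlockBound_nonneg k) hB
      by_cases hyN' : y ≤ 2 ^ N - 1
      · exact (ih y hy hyN').trans hsum
      set x : ℝ := 2 ^ N - 1
      have hx : x ∈ Icc 0 t := ⟨sub_nonneg.2 (one_le_pow₀ one_le_two), by linarith [hy.2]⟩
      have hxy : x ≤ y := by linarith
      have hS_block : ∫ τ in x..y, h τ ^ 2 ≤ B ^ 2 * log (2 + y) ^ 2 := by
        rw [← integral_sub_integral_of_integrableOn_Icc hh2 hx hy]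
        linarith [hS y hy, integral_nonneg (μ := volume) hx.1 fun τ _ => sq_nonneg (h τ)]
      have hblock := integral_inv_sqrt_mul_le_dyadicBlockBound hB le_rfl hxy hyN hh₀
        (hh.mono_measure (Measure.restrict_mono (Ioc_subset_Icc_self.trans
          (Icc_subset_Icc hx.1 hy.2)) le_rfl)) hS_block
      rw [← sub_add_cancel (∫ τ in (0 : ℝ)..y, _) (∫ τ in (0 : ℝ)..x, _),
        integral_sub_integral_of_integrableOn_Icc hwh hx hy, Finset.sum_range_succ, mul_add]
      linarith [ih x hx le_rfl]
  obtain ⟨N, hN⟩ := pow_unbounded_of_one_lt (t + 1) (one_lt_two : (1 : ℝ) < 2)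
  calc ∫ τ in (0 : ℝ)..t, (√(1 + τ ^ 2))⁻¹ * h τ
      ≤ B * ∑ k ∈ Finset.range N, dyadicBlockBound k :=
        hblocks N t (right_mem_Icc.2 ht) (by linarith)
    _ ≤ B * ∑' k, dyadicBlockBound k := by
        gcongr
        exact summable_dyadicBlockBound.sum_le_tsum _ fun k _ => dyadicBlockBound_nonneg k

theorem integral_rpow_add_inv_sqrt_mul_le {h : ℝ → ℝ} {A B r t : ℝ} (hA : 0 ≤ A) (hB : 0 ≤ B)
    (hr : 1 < r) (ht : 0 ≤ t) (hh₀ : ∀ τ, 0 ≤ h τ) (hh : MemLp h 2 (volume.restrict (Icc 0 t)))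
    (hS : ∀ s ∈ Icc 0 t, ∫ τ in (0 : ℝ)..s, h τ ^ 2 ≤ B ^ 2 * log (2 + s) ^ 2) :
    ∫ τ in (0 : ℝ)..t, (A * √(1 + τ ^ 2) ^ (-r) + (√(1 + τ ^ 2))⁻¹ * h τ)
      ≤ A * (∫ τ, √(1 + τ ^ 2) ^ (-r)) + B * ∑' k, dyadicBlockBound k := by
  have hK := integrable_sqrt_one_add_sq_rpow_neg hr
  have hK_le : ∫ τ in (0 : ℝ)..t, √(1 + τ ^ 2) ^ (-r) ≤ ∫ τ, √(1 + τ ^ 2) ^ (-r) := by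
    rw [integral_of_le ht]
    exact setIntegral_le_integral hK (ae_of_all _ fun τ => by positivity)
  rw [intervalIntegral.integral_add (hK.const_mul A).intervalIntegrable
      ((intervalIntegrable_iff_integrableOn_Icc_of_le ht).2 (integrableOn_inv_sqrt_mul hh)),
    intervalIntegral.integral_const_mul]
  exact add_le_add (mul_le_mul_of_nonneg_left hK_le hA)
    (integral_inv_sqrt_mul_le_tsum hB ht hh₀ hh hS)

/-- Gronwall inequality with dyadic decomposition / logarithmic forcing:
if `E(t) ≤ E(0) + ∫₀ᵗ (A⟨τ⟩^{-5/4} + ⟨τ⟩⁻¹ h(τ)) E(τ) dτ` where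
`∫₀^{T'} h² ≤ B²(log(2+T'))²`, then `E(t) ≤ E(0) exp(C(A+B))` with an
absolute constant `C`. -/
theorem gronwall_dyadic_log_forcing :
    ∃ C > (0 : ℝ), ∀ (T A B : ℝ) (E h : ℝ → ℝ),
      0 ≤ A → 0 ≤ B →
      ContinuousOn E (Ico 0 T) → (∀ t, 0 ≤ E t) →
      Measurable h → (∀ τ, 0 ≤ h τ) →
      (∀ t ∈ Ico (0 : ℝ) T, IntervalIntegrable (fun τ => (h τ) ^ 2) volume 0 t) →
      (∀ T' ∈ Ico (0 : ℝ) T,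
        ∫ τ in (0 : ℝ)..T', (h τ) ^ 2 ≤ B ^ 2 * (Real.log (2 + T')) ^ 2) →
      (∀ t ∈ Ico (0 : ℝ) T,
        E t ≤ E 0 + ∫ τ in (0 : ℝ)..t,
          (A * (Real.sqrt (1 + τ ^ 2)) ^ (-(5 / 4 : ℝ))
            + (Real.sqrt (1 + τ ^ 2))⁻¹ * h τ) * E τ) →
      ∀ t ∈ Ico (0 : ℝ) T, E t ≤ E 0 * Real.exp (C * (A + B)) := by
  set K := ∫ τ, √(1 + τ ^ 2) ^ (-(5 / 4 : ℝ))
  set M := ∑' k, dyadicBlockBound k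
  have hK : Integrable fun τ : ℝ => √(1 + τ ^ 2) ^ (-(5 / 4 : ℝ)) :=
    integrable_sqrt_one_add_sq_rpow_neg (by norm_num)
  have hK₀ : 0 ≤ K := integral_nonneg fun τ => by positivity
  have hM₀ : 0 < M := tsum_dyadicBlockBound_pos
  refine ⟨2 * (K + M), by positivity, ?_⟩
  intro T A B E h hA hB hE hE₀ hh hh₀ hh2 hS hle t ht
  have hIcc : Icc 0 t ⊆ Ico 0 T := Icc_subset_Ico_right ht.2
  have hmem : MemLp h 2 (volume.restrict (Icc 0 t)) :=
    (memLp_two_iff_integrable_sq hh.aestronglyMeasurable).2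
      ((intervalIntegrable_iff_integrableOn_Icc_of_le ht.1).1 (hh2 t ht))
  have hf : IntegrableOn
      (fun τ => A * √(1 + τ ^ 2) ^ (-(5 / 4 : ℝ)) + (√(1 + τ ^ 2))⁻¹ * h τ) (Icc 0 t) :=
    (hK.const_mul A).integrableOn.add (integrableOn_inv_sqrt_mul hmem)
  have hgron := le_mul_exp_integral_of_le_add_integral ht.1 hf (hE.mono hIcc)
    (fun τ _ => add_nonneg (by positivity) (mul_nonneg (by positivity) (hh₀ τ)))
    (fun τ _ => hE₀ τ) fun x hx => hle x (hIcc hx)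
  have hcoeff := integral_rpow_add_inv_sqrt_mul_le (r := 5 / 4) hA hB (by norm_num) ht.1 hh₀
    hmem fun s hs => hS s (hIcc hs)
  calc E t ≤ E 0 * exp (2 * (A * K + B * M)) := hgron.trans (by gcongr; exact hE₀ 0)
    _ ≤ E 0 * exp (2 * (K + M) * (A + B)) := mul_le_mul_of_nonneg_left
        (exp_le_exp.2 (by nlinarith [mul_nonneg hA hM₀.le, mul_nonneg hB hK₀])) (hE₀ 0)
end
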